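/- arXiv:1109.5834 — 7 statements merged into one kernel-verified Lean document; each statement's English description precedes it below -/
import Mathlib

section
/- Let I be an ideal of a Noetherian ring R such that for all primes P ⊇ I, the function k ↦ depth(R_P/I^k R_P) is non-increasing. Then I satisfies the persistence property: if P ∈ Ass(I^k) then P ∈ Ass(I^{k+1}). -/
/-!
Localizing at `P` turns `P ∈ Ass(R/I^k)` into `depth(R_P/I^k R_P) = 0`. Over a Noetherian local
ring a nonzero finite module has depth zero exactly when the maximal ideal is associated: otherwise
prime avoidance over the finitely many associated primes yields a regular element of the maximal
ideal, so the depth is at least one; this needs regular sequences to be bounded in length (by the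
Krull dimension), since `sSup` of an unbounded subset of `ℕ` is `0`. Monotonicity of the depth
passes depth zero from `k` to `k + 1`, and localizing back gives `P ∈ Ass(R/I^(k+1))`.
-/

/-- The depth of a module `M` with respect to an ideal `J`: the supremum of lengths of
`M`-regular sequences with entries in `J`. -/
noncomputable def ringDepth {R : Type} [CommRing R] (J : Ideal R)
    (M : Type) [AddCommGroup M] [Module R M] : ℕ :=
  sSup {len : ℕ | ∃ rs : List R, rs.length = len ∧ (∀ r ∈ rs, r ∈ J) ∧
    RingTheory.Sequence.IsRegular M rs}

open IsLocalRing RingTheory.Sequence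

section Depth

variable {A : Type} [CommRing A] [IsNoetherianRing A] {M : Type} [AddCommGroup M] [Module A M]

lemma length_le_ringKrullDim_of_isRegular [IsLocalRing A] [Module.Finite A M] {rs : List A}
    (hrs : IsRegular M rs) : (rs.length : WithBot ℕ∞) ≤ ringKrullDim A := by
  have : Nontrivial (M ⧸ Ideal.ofList rs • (⊤ : Submodule A M)) :=
    Submodule.Quotient.nontrivial_iff.mpr hrs.2.symm
  have : Nonempty (Module.support A (M ⧸ Ideal.ofList rs • (⊤ : Submodule A M))) :=
    Module.nonempty_support_of_nontrivial.to_subtype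
  calc (rs.length : WithBot ℕ∞)
      ≤ Module.supportDim A (M ⧸ Ideal.ofList rs • (⊤ : Submodule A M)) + rs.length :=
        le_add_of_nonneg_left Order.krullDim_nonneg
    _ = Module.supportDim A M := Module.supportDim_add_length_eq_supportDim_of_isRegular rs hrs
    _ ≤ ringKrullDim A := Module.supportDim_le_ringKrullDim A M

lemma bddAbove_lengths_isRegular [IsLocalRing A] [Module.Finite A M] (J : Ideal A) :
    BddAbove {len : ℕ | ∃ rs : List A, rs.length = len ∧ (∀ r ∈ rs, r ∈ J) ∧
      IsRegular M rs} := by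
  refine ⟨(LTSeries.longestOf (PrimeSpectrum A)).length, ?_⟩
  rintro _ ⟨rs, rfl, -, hrs⟩
  have := length_le_ringKrullDim_of_isRegular hrs
  rw [ringKrullDim, Order.krullDim_eq_length_of_finiteDimensionalOrder] at this
  exact_mod_cast this

lemma ringDepth_eq_zero_of_le_mem_associatedPrimes {J p : Ideal A}
    (hp : p ∈ associatedPrimes A M) (hJ : J ≤ p) : ringDepth J M = 0 := by
  have hnreg : ∀ r ∈ J, ¬ IsSMulRegular M r := fun r hr =>
    (biUnion_associatedPrimes_eq_compl_regular A M).subset (Set.mem_biUnion hp (hJ hr))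
  refine Nat.le_zero.mp (csSup_le' ?_)
  rintro _ ⟨_ | ⟨r, rs⟩, rfl, hJrs, hrs⟩
  · exact le_rfl
  · exact absurd ((isRegular_cons_iff M r rs).mp hrs).1 (hnreg r (hJrs r List.mem_cons_self))

lemma one_le_ringDepth_of_isSMulRegular [IsLocalRing A] [Module.Finite A M] [Nontrivial M]
    {r : A} (hr : r ∈ maximalIdeal A) (hreg : IsSMulRegular M r) :
    1 ≤ ringDepth (maximalIdeal A) M := by
  refine le_csSup (bddAbove_lengths_isRegular _) ⟨[r], rfl, by simpa using hr, ?_⟩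
  refine ⟨(isWeaklyRegular_singleton_iff M r).mpr hreg, ?_⟩
  rw [Ideal.ofList_singleton]
  exact Submodule.top_ne_ideal_smul_of_le_jacobson_annihilator
    (((Ideal.span_singleton_le_iff_mem _).mpr hr).trans (maximalIdeal_le_jacobson _))

lemma exists_isSMulRegular_of_forall_not_le_associatedPrime [Module.Finite A M] {J : Ideal A}
    (hJ : ∀ p ∈ associatedPrimes A M, ¬ J ≤ p) : ∃ r ∈ J, IsSMulRegular M r := by
  by_contra! h
  obtain ⟨p, hp, hJp⟩ := (Ideal.subset_union_prime_finite (associatedPrimes.finite A M)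
    (f := id) ⊥ ⊥ fun p hp _ _ => hp.isPrime).mp <| by
      simp only [id, biUnion_associatedPrimes_eq_compl_regular A M]
      exact fun r hr => h r hr
  exact hJ p hp hJp

theorem ringDepth_maximalIdeal_eq_zero_iff [IsLocalRing A] [Module.Finite A M] [Nontrivial M] :
    ringDepth (maximalIdeal A) M = 0 ↔ maximalIdeal A ∈ associatedPrimes A M := by
  refine ⟨fun h => ?_, fun h => ringDepth_eq_zero_of_le_mem_associatedPrimes h le_rfl⟩
  by_contra hm
  obtain ⟨r, hr, hreg⟩ := exists_isSMulRegular_of_forall_not_le_associatedPrime (M := M)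
    (J := maximalIdeal A) fun p hp hle =>
      hm (le_antisymm (le_maximalIdeal hp.isPrime.ne_top) hle ▸ hp)
  have := one_le_ringDepth_of_isSMulRegular hr hreg
  omega

end Depth

lemma maximalIdeal_mem_associatedPrimes_quotient_map_iff {R : Type} [CommRing R]
    [IsNoetherianRing R] (P : Ideal R) [P.IsPrime] (J : Ideal R) :
    maximalIdeal (Localization.AtPrime P) ∈ associatedPrimes (Localization.AtPrime P)
      (Localization.AtPrime P ⧸ J.map (algebraMap R (Localization.AtPrime P))) ↔
      P ∈ associatedPrimes R (R ⧸ J) := by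
  have hJ : J.localized' (Localization.AtPrime P) P.primeCompl
      (Algebra.linearMap R (Localization.AtPrime P)) = J.map (algebraMap R _) := by
    rw [Submodule.localized'_eq_span]; rfl
  have key :=
    Module.associatedPrimes.preimage_comap_associatedPrimes_eq_associatedPrimes_of_isLocalizedModule
      P.primeCompl (Localization.AtPrime P)
      (J.toLocalizedQuotient' (Localization.AtPrime P) P.primeCompl
        (Algebra.linearMap R (Localization.AtPrime P)))
  rw [hJ] at key
  rw [← key, Set.mem_preimage, ← Ideal.under_def, Localization.AtPrime.under_maximalIdeal]

/-- If for all primes `P ⊇ I` the function `k ↦ depth (R_P / I^k R_P)` is non-increasing,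
then `I` satisfies the persistence property. -/
theorem stmt1 {R : Type} [CommRing R] [IsNoetherianRing R] (I : Ideal R)
    (hmono : ∀ (P : Ideal R) (_ : P.IsPrime), I ≤ P → ∀ k : ℕ, 1 ≤ k →
      ringDepth (IsLocalRing.maximalIdeal (Localization.AtPrime P))
        (Localization.AtPrime P ⧸
          (I ^ (k + 1)).map (algebraMap R (Localization.AtPrime P))) ≤
      ringDepth (IsLocalRing.maximalIdeal (Localization.AtPrime P))
        (Localization.AtPrime P ⧸
          (I ^ k).map (algebraMap R (Localization.AtPrime P))))
    (k : ℕ) (hk1 : 1 ≤ k) (P : Ideal R) (hP : P ∈ associatedPrimes R (R ⧸ I ^ k)) :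
    P ∈ associatedPrimes R (R ⧸ I ^ (k + 1)) := by
  have hPprime := hP.isPrime
  have hIP : I ≤ P := hPprime.le_of_pow_le <| by
    simpa [Submodule.annihilator_top, Ideal.annihilator_quotient] using hP.annihilator_le
  have hne_top : (I ^ (k + 1)).map (algebraMap R (Localization.AtPrime P)) ≠ ⊤ :=
    ne_top_of_le_ne_top (maximalIdeal.isMaximal _).ne_top <|
      Localization.AtPrime.map_eq_maximalIdeal (I := P) ▸
        Ideal.map_mono ((Ideal.pow_le_self k.succ_ne_zero).trans hIP)
  have : Nontrivial (Localization.AtPrime P ⧸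
      (I ^ (k + 1)).map (algebraMap R (Localization.AtPrime P))) :=
    Ideal.Quotient.nontrivial_iff.mpr hne_top
  have hdepth_k := ringDepth_eq_zero_of_le_mem_associatedPrimes
    ((maximalIdeal_mem_associatedPrimes_quotient_map_iff P _).mpr hP) le_rfl
  have hdepth_succ := hmono P hPprime hIP k hk1
  rw [← maximalIdeal_mem_associatedPrimes_quotient_map_iff,
    ← ringDepth_maximalIdeal_eq_zero_iff]
  omega
end

section
/- Let B be the set of bases of a discrete polymatroid on [n] and u, v ∈ B with u(i) > v(i) for some i. Then there exists j ∈ [n] with u(j) < v(j) such that both u - ε_i + ε_j ∈ B and v - ε_j + ε_i ∈ B (symmetric exchange property). -/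
/-- The exchange vector `u - ε_i + ε_j` (for `i ≠ j`). -/
def exch {n : ℕ} (u : Fin n → ℕ) (i j : Fin n) : Fin n → ℕ :=
  fun k => if k = i then u k - 1 else if k = j then u k + 1 else u k

/-- `B` is the set of bases of a discrete polymatroid of rank `d` on `[n]`:
it is nonempty, all elements have modulus `d`, and the exchange property holds. -/
def IsBaseSet {n : ℕ} (B : Finset (Fin n → ℕ)) (d : ℕ) : Prop :=
  B.Nonempty ∧ (∀ u ∈ B, ∑ k, u k = d) ∧
    ∀ u ∈ B, ∀ v ∈ B, ∀ i : Fin n, v i < u i → ∃ j : Fin n, u j < v j ∧ exch u i j ∈ B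

/-- The ℓ¹ distance between two vectors of naturals. -/
def dsum {n : ℕ} (u v : Fin n → ℕ) : ℕ := ∑ m, ((u m - v m) + (v m - u m))

lemma exch_at_fst {n : ℕ} (u : Fin n → ℕ) (i j : Fin n) : exch u i j i = u i - 1 := by
  simp [exch]

lemma exch_at_snd {n : ℕ} (u : Fin n → ℕ) (i j : Fin n) (h : j ≠ i) :
    exch u i j j = u j + 1 := by
  simp [exch, h]

lemma exch_at_other {n : ℕ} (u : Fin n → ℕ) (i j k : Fin n) (h1 : k ≠ i) (h2 : k ≠ j) :
    exch u i j k = u k := by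
  simp [exch, h1, h2]

lemma exch_id1 {n : ℕ} (v : Fin n → ℕ) (i j k l : Fin n)
    (hij : i ≠ j) (hik : i ≠ k) (hil : i ≠ l) (hjk : j ≠ k) (hjl : j ≠ l) (hkl : k ≠ l)
    (hvj : 1 ≤ v j) (hvl : 1 ≤ v l) :
    exch (exch (exch v j k) l i) k j = exch v l i := by
  funext x
  simp only [exch]
  split_ifs <;> simp_all <;> omega

lemma exch_id2 {n : ℕ} (v : Fin n → ℕ) (i j k l : Fin n)
    (hij : i ≠ j) (hik : i ≠ k) (hil : i ≠ l) (hjk : j ≠ k) (hjl : j ≠ l) (hkl : k ≠ l)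
    (hvj : 1 ≤ v j) (hvl : 1 ≤ v l) :
    exch (exch (exch v j k) l i) k l = exch v j i := by
  funext x
  simp only [exch]
  split_ifs <;> simp_all <;> omega

lemma exch_id3 {n : ℕ} (v : Fin n → ℕ) (i j k : Fin n)
    (hij : i ≠ j) (hik : i ≠ k) (hjk : j ≠ k) (hvj : 2 ≤ v j) :
    exch (exch (exch v j k) j i) k j = exch v j i := by
  funext x
  simp only [exch]
  split_ifs <;> simp_all <;> omega

lemma exch_lt_mem {n : ℕ} (v : Fin n → ℕ) (i j k l x : Fin n)
    (hij : i ≠ j) (hik : i ≠ k) (hil : i ≠ l) (hkj : k ≠ j) (hkl : k ≠ l)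
    (hx : exch (exch v j k) l i x < v x) : x = j ∨ x = l := by
  by_contra h
  push_neg at h
  obtain ⟨h1, h2⟩ := h
  simp only [exch] at hx
  split_ifs at hx <;> simp_all <;> omega

/-- The symmetric exchange property for the bases of a discrete polymatroid. -/
theorem stmt5 {n : ℕ} (B : Finset (Fin n → ℕ)) (d : ℕ) (hB : IsBaseSet B d) :
    ∀ u ∈ B, ∀ v ∈ B, ∀ i : Fin n, v i < u i →
      ∃ j : Fin n, u j < v j ∧ exch u i j ∈ B ∧ exch v j i ∈ B := by
  obtain ⟨-, -, hex⟩ := hB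
  suffices H : ∀ D : ℕ, ∀ u v : Fin n → ℕ, ∀ i : Fin n, u ∈ B → v ∈ B → v i < u i →
      dsum u v ≤ D → ∃ j : Fin n, u j < v j ∧ exch u i j ∈ B ∧ exch v j i ∈ B by
    intro u hu v hv i hvi
    exact H (dsum u v) u v i hu hv hvi le_rfl
  intro D
  induction D using Nat.strong_induction_on with
  | _ D IH =>
  intro u v i hu hv hvi hD
  by_contra hcon
  push_neg at hcon
  -- Step 1: weak exchange for (u, v) at i produces j
  obtain ⟨j, huj, hA⟩ := hex u hu v hv i hvi
  have hvj : exch v j i ∉ B := hcon j huj hA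
  have hij : i ≠ j := by
    intro h; rw [h] at hvi; omega
  -- Step 2: weak exchange for (v, u) at j produces k
  obtain ⟨k, hvk, hv'B⟩ := hex v hv u hu j huj
  have hki : k ≠ i := by
    intro h; rw [h] at hv'B; exact hvj hv'B
  have hkj : k ≠ j := by
    intro h; rw [h] at hvk; omega
  have hv'i : exch v j k i = v i := exch_at_other v j k i hij (Ne.symm hki)
  have hv'k : exch v j k k = v k + 1 := exch_at_snd v j k hkj
  -- distance decreases
  have hdist : dsum u (exch v j k) < dsum u v := by
    unfold dsum
    apply Finset.sum_lt_sum
    · intro m _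
      simp only [exch]
      split_ifs <;> simp_all <;> omega
    · refine ⟨j, Finset.mem_univ j, ?_⟩
      rw [exch_at_fst]
      omega
  -- Step 3: induction hypothesis applied to (u, v') at i
  obtain ⟨l, hul, hulB, hwB⟩ := IH (dsum u (exch v j k)) (lt_of_lt_of_le hdist hD)
    u (exch v j k) i hu hv'B (by rw [hv'i]; exact hvi) le_rfl
  have hli : l ≠ i := by
    intro h; rw [h, hv'i] at hul; omega
  have hlk : l ≠ k := by
    intro h; rw [h, hv'k] at hul; omega
  -- w := exch (exch v j k) l i ∈ B, and w k = v k + 1 > v k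
  have hwk : v k < exch (exch v j k) l i k := by
    rw [exch_at_other _ l i k (Ne.symm hlk) hki, hv'k]
    omega
  -- Step 4: weak exchange for (w, v) at k produces m
  obtain ⟨m, hwm, hfin⟩ := hex (exch (exch v j k) l i) hwB v hv k hwk
  -- m must be j or l
  have hm : m = j ∨ m = l :=
    exch_lt_mem v i j k l m hij (Ne.symm hki) (Ne.symm hli) hkj (Ne.symm hlk) hwm
  by_cases hlj : l = j
  · -- case l = j : then m = j and exch w k j = exch v j i
    have hmj : m = j := by rcases hm with h | h; exact h; rw [← hlj]; exact h
    rw [hmj] at hfin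
    rw [hlj] at hul hwB hfin
    have hvj2 : 2 ≤ v j := by
      rw [exch_at_fst] at hul; omega
    rw [exch_id3 v i j k hij (Ne.symm hki) (Ne.symm hkj) hvj2] at hfin
    exact hvj hfin
  · -- case l ≠ j
    have hv'l : exch v j k l = v l := exch_at_other v j k l hlj hlk
    have hull : u l < v l := by rw [hv'l] at hul; exact hul
    have hvl : exch v l i ∉ B := hcon l hull hulB
    have h1vj : 1 ≤ v j := by omega
    have h1vl : 1 ≤ v l := by omega
    rcases hm with hmj | hml
    · rw [hmj] at hfin
      rw [exch_id1 v i j k l hij (Ne.symm hki) (Ne.symm hli) (Ne.symm hkj)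
        (fun h => hlj h.symm) (fun h => hlk h.symm) h1vj h1vl] at hfin
      exact hvl hfin
    · rw [hml] at hfin
      rw [exch_id2 v i j k l hij (Ne.symm hki) (Ne.symm hli) (Ne.symm hkj)
        (fun h => hlj h.symm) (fun h => hlk h.symm) h1vj h1vl] at hfin
      exact hvj hfin
end

section
/- A transversal polymatroidal ideal has a unique presentation as a product of powers of distinct monomial prime ideals: if P_{G_1}^{a_1} ⋯ P_{G_s}^{a_s} = P_{H_1}^{b_1} ⋯ P_{H_t}^{b_t} with all a_j, b_j ≥ 1, the G_j pairwise distinct nonempty subsets of [n], and the H_j pairwise distinct nonempty subsets of [n], then s = t and after reindexing G_j = H_j and a_j = b_j for all j. -/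
/-
The product `∏ P_{G_j}^{a_j}` lies in `P_F^k` exactly when `k ≤ ∑_{G_j ⊆ F} a_j`: one direction
because `P_{G_j} ⊆ P_F` for `G_j ⊆ F`; the other by evaluating the monomial `∏ x_{g_j}^{a_j}`,
with `g_j ∈ G_j` chosen outside `F` whenever possible, under `x_i ↦ t` for `i ∈ F` and `x_i ↦ 1`
otherwise. Hence the ideal determines `F ↦ ∑_{G_j ⊆ F} a_j`, and Möbius inversion over the
subsets of `[n]` recovers the exponent attached to each `G_j`.
-/

open MvPolynomial

/-- The monomial prime ideal `P_F = (x_i : i ∈ F)`. -/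
noncomputable def PF {K : Type} [Field K] {n : ℕ} (F : Finset (Fin n)) :
    Ideal (MvPolynomial (Fin n) K) :=
  Ideal.span ((fun i => (X i : MvPolynomial (Fin n) K)) '' ↑F)

section Weights

variable {α ι : Type*} [Fintype ι] [DecidableEq α]

def subsetWeight (G : ι → Finset α) (a : ι → ℕ) (F : Finset α) : ℕ :=
  ∑ j with G j ⊆ F, a j

def exactWeight (G : ι → Finset α) (a : ι → ℕ) (E : Finset α) : ℕ :=
  ∑ j with G j = E, a j

theorem sum_powerset_exactWeight (G : ι → Finset α) (a : ι → ℕ) (F : Finset α) :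
    ∑ E ∈ F.powerset, exactWeight G a E = subsetWeight G a F := by
  simp only [exactWeight, subsetWeight, Finset.sum_fiberwise_eq_sum_filter, Finset.mem_powerset]

theorem exactWeight_apply {G : ι → Finset α} (hG : Function.Injective G) (a : ι → ℕ) (j : ι) :
    exactWeight G a (G j) = a j := by
  rw [exactWeight, Finset.sum_eq_single_of_mem j (by simp)]
  intro i hi hij
  exact absurd (hG (Finset.mem_filter.1 hi).2) hij

theorem support_exactWeight (G : ι → Finset α) {a : ι → ℕ} (ha : ∀ j, 0 < a j) :
    Function.support (exactWeight G a) = Set.range G := by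
  ext E
  simp [exactWeight, Finset.sum_eq_zero_iff, (ha _).ne']

end Weights

theorem Finset.eq_of_forall_sum_powerset_eq {α M : Type*} [AddCancelCommMonoid M]
    {f g : Finset α → M} (h : ∀ F : Finset α, ∑ E ∈ F.powerset, f E = ∑ E ∈ F.powerset, g E) :
    f = g := by
  classical
  funext F
  induction F using Finset.strongInduction with
  | H F ih =>
    have hF := h F
    rw [← Finset.add_sum_erase _ _ (Finset.mem_powerset_self F),
      ← Finset.add_sum_erase _ _ (Finset.mem_powerset_self F),
      Finset.sum_congr rfl fun E hE => ih E ?_] at hF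
    · exact add_right_cancel hF
    · rw [Finset.mem_erase, Finset.mem_powerset] at hE
      exact hE.2.ssubset_of_ne hE.1

theorem Finset.exists_mem_iff_subset {α : Type*} {G : Finset α} (hG : G.Nonempty)
    (F : Finset α) : ∃ g ∈ G, (g ∈ F ↔ G ⊆ F) := by
  by_cases hGF : G ⊆ F
  · obtain ⟨g, hg⟩ := hG
    exact ⟨g, hg, iff_of_true (hGF hg) hGF⟩
  · obtain ⟨g, hg, hgF⟩ := Finset.not_subset.1 hGF
    exact ⟨g, hg, iff_of_false hgF hGF⟩

section MonomialPrimes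

variable {K : Type} [Field K] {n : ℕ}

theorem X_mem_PF {F : Finset (Fin n)} {i : Fin n} (hi : i ∈ F) :
    (X i : MvPolynomial (Fin n) K) ∈ PF (K := K) F :=
  Ideal.subset_span ⟨i, hi, rfl⟩

theorem PF_mono {F F' : Finset (Fin n)} (h : F ⊆ F') : PF (K := K) F ≤ PF (K := K) F' :=
  Ideal.span_mono (Set.image_mono (by exact_mod_cast h))

variable {ι : Type*} [Fintype ι]

noncomputable def mergeVars (F : Finset (Fin n)) :
    MvPolynomial (Fin n) K →ₐ[K] Polynomial K :=
  aeval fun i => if i ∈ F then Polynomial.X else 1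

theorem X_pow_dvd_mergeVars_of_mem_PF_pow {F : Finset (Fin n)} {k : ℕ}
    {f : MvPolynomial (Fin n) K} (hf : f ∈ PF (K := K) F ^ k) :
    Polynomial.X ^ k ∣ mergeVars F f := by
  have hPF : (PF (K := K) F).map (mergeVars F) ≤ Ideal.span {Polynomial.X} := by
    rw [PF, Ideal.map_span, Ideal.span_le]
    rintro _ ⟨_, ⟨i, hi, rfl⟩, rfl⟩
    simp [mergeVars, Finset.mem_coe.1 hi]
  have hmap : mergeVars F f ∈ (PF (K := K) F).map (mergeVars F) ^ k := by
    rw [← Ideal.map_pow]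
    exact Ideal.mem_map_of_mem _ hf
  replace hmap := Ideal.pow_right_mono hPF k hmap
  rwa [Ideal.span_singleton_pow, Ideal.mem_span_singleton] at hmap

theorem mergeVars_prod_X_pow (F : Finset (Fin n)) (g : ι → Fin n) (a : ι → ℕ) :
    mergeVars F (∏ j, (X (g j) : MvPolynomial (Fin n) K) ^ a j) =
      Polynomial.X ^ ∑ j with g j ∈ F, a j := by
  simp only [map_prod, map_pow, mergeVars, aeval_X, ite_pow, one_pow]
  rw [← Finset.prod_filter, Finset.prod_pow_eq_pow_sum]

theorem prod_PF_pow_le_PF_pow_subsetWeight (G : ι → Finset (Fin n)) (a : ι → ℕ)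
    (F : Finset (Fin n)) :
    ∏ j, PF (K := K) (G j) ^ a j ≤ PF (K := K) F ^ subsetWeight G a F :=
  calc ∏ j, PF (K := K) (G j) ^ a j
      ≤ ∏ j with G j ⊆ F, PF (K := K) (G j) ^ a j :=
        Finset.prod_le_prod_of_subset_of_le_one' (Finset.filter_subset _ _)
          fun _ _ _ => Ideal.one_eq_top (R := MvPolynomial (Fin n) K) ▸ le_top
    _ ≤ ∏ j with G j ⊆ F, PF (K := K) F ^ a j :=
        Finset.prod_le_prod' fun _ hj =>
          Ideal.pow_right_mono (PF_mono (Finset.mem_filter.1 hj).2) _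
    _ = PF (K := K) F ^ subsetWeight G a F := Finset.prod_pow_eq_pow_sum _ _ _

theorem prod_PF_pow_le_PF_pow_iff {G : ι → Finset (Fin n)} (hG : ∀ j, (G j).Nonempty)
    (a : ι → ℕ) (F : Finset (Fin n)) (k : ℕ) :
    ∏ j, PF (K := K) (G j) ^ a j ≤ PF (K := K) F ^ k ↔ k ≤ subsetWeight G a F := by
  refine ⟨fun h => ?_, fun hk =>
    (prod_PF_pow_le_PF_pow_subsetWeight G a F).trans (Ideal.pow_le_pow_right hk)⟩
  choose g hgG hgF using fun j => Finset.exists_mem_iff_subset (hG j) F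
  have hmem : ∏ j, (X (g j) : MvPolynomial (Fin n) K) ^ a j ∈ PF (K := K) F ^ k :=
    h (Ideal.prod_mem_prod fun j _ => Ideal.pow_mem_pow (X_mem_PF (hgG j)) _)
  have hdvd := X_pow_dvd_mergeVars_of_mem_PF_pow hmem
  rwa [mergeVars_prod_X_pow, Finset.filter_congr fun j _ => hgF j,
    pow_dvd_pow_iff Polynomial.X_ne_zero Polynomial.not_isUnit_X] at hdvd

theorem subsetWeight_eq_of_prod_PF_pow_eq {κ : Type*} [Fintype κ]
    {G : ι → Finset (Fin n)} {H : κ → Finset (Fin n)} (hG : ∀ j, (G j).Nonempty)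
    (hH : ∀ j, (H j).Nonempty) {a : ι → ℕ} {b : κ → ℕ}
    (heq : ∏ j, PF (K := K) (G j) ^ a j = ∏ j, PF (K := K) (H j) ^ b j) :
    subsetWeight G a = subsetWeight H b := by
  funext F
  apply le_antisymm
  · rw [← prod_PF_pow_le_PF_pow_iff (K := K) hH, ← heq, prod_PF_pow_le_PF_pow_iff hG]
  · rw [← prod_PF_pow_le_PF_pow_iff (K := K) hG, heq, prod_PF_pow_le_PF_pow_iff hH]

end MonomialPrimes

/-- A transversal polymatroidal ideal has a unique presentation as a product of powers of
pairwise distinct monomial prime ideals. -/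
theorem stmt6 {K : Type} [Field K] {n s t : ℕ}
    (G : Fin s → Finset (Fin n)) (H : Fin t → Finset (Fin n))
    (a : Fin s → ℕ) (b : Fin t → ℕ)
    (hG : ∀ j, (G j).Nonempty) (hH : ∀ j, (H j).Nonempty)
    (ha : ∀ j, 1 ≤ a j) (hb : ∀ j, 1 ≤ b j)
    (hGinj : Function.Injective G) (hHinj : Function.Injective H)
    (heq : ∏ j, (PF (K := K) (G j)) ^ a j = ∏ j, (PF (K := K) (H j)) ^ b j) :
    ∃ e : Fin s ≃ Fin t, ∀ j, G j = H (e j) ∧ a j = b (e j) := by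
  have hweight : exactWeight G a = exactWeight H b :=
    Finset.eq_of_forall_sum_powerset_eq fun F => by
      rw [sum_powerset_exactWeight, sum_powerset_exactWeight,
        subsetWeight_eq_of_prod_PF_pow_eq hG hH heq]
  have hrange : Set.range G = Set.range H := by
    rw [← support_exactWeight G ha, ← support_exactWeight H hb, hweight]
  let e : Fin s ≃ Fin t := (Equiv.ofInjective G hGinj).trans
    ((Equiv.setCongr hrange).trans (Equiv.ofInjective H hHinj).symm)
  have hHe : ∀ j, H (e j) = G j := fun j => Equiv.apply_ofInjective_symm hHinj _
  refine ⟨e, fun j => ⟨(hHe j).symm, ?_⟩⟩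
  rw [← exactWeight_apply hGinj a, ← exactWeight_apply hHinj b, hHe, hweight]
end

section
/- Let I = P_{F_1} ⋯ P_{F_r} ⊆ S = K[x_1,…,x_n] be a transversal polymatroidal ideal. Then the graded maximal ideal m = (x_1,…,x_n) belongs to Ass(S/I) if and only if ⋃_{i=1}^r F_i = [n] and the intersection graph G_I is connected. -/
/-!
`I` is the monomial ideal spanned by the transversal monomials `x_{g 1} ⋯ x_{g r}`, `g i ∈ F_i`,
and `m ∈ Ass(S/I)` means that some `w ∉ I` has `x_j w ∈ I` for every `j`; then already some
monomial `x^e` of `w` lies outside `I` while every `x_j x^e` lies in `I`.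

Given such an `x^e`: a variable lying in no `F_i` occurs in no transversal, so it could be dropped
from the witness for `x_j x^e`; and if `G_I` had a proper component `A`, the witnesses for `x_j x^e` and
`x_{j'} x^e`, with `j` in a block of `A` and `j'` in a block outside `A`, glue into a transversal
monomial dividing `x^e`.
Conversely, grow a spanning tree of `G_I` one edge `ab` at a time, choosing `c ∈ F_a ∩ F_b`: the
product `x^D` of these `r - 1` variables has too small a degree to lie in `I`, while `x_j x^D` is a
transversal monomial for every `j ∈ ⋃ F_i`.
-/

open MvPolynomial

/-- The intersection graph `G_I` of `I = P_{F_1} ⋯ P_{F_r}`: vertices `1, …, r`, with an edge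
`{i, j}` iff `F_i ∩ F_j ≠ ∅`. -/
def interGraph {n r : ℕ} (F : Fin r → Finset (Fin n)) : SimpleGraph (Fin r) :=
  SimpleGraph.fromRel fun i j => (F i ∩ F j).Nonempty

open Finset

lemma apply_le_of_le_single_add {σ : Type*} {f e : σ →₀ ℕ} {j l : σ}
    (h : f ≤ Finsupp.single j 1 + e) (hjl : j ≠ l) : f l ≤ e l := by
  simpa [hjl] using h l

section Transversal

variable {ι σ : Type*} (F : ι → Finset σ)

def HasTransversalLE [Fintype ι] (e : σ →₀ ℕ) : Prop :=
  ∃ g : ι → σ, (∀ i, g i ∈ F i) ∧ ∑ i, Finsupp.single (g i) 1 ≤ e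

def IsTransversalCofactor (s : Finset ι) (D : σ →₀ ℕ) : Prop :=
  ∀ i ∈ s, ∀ j ∈ F i, ∃ g : ι → σ,
    (∀ k ∈ s, g k ∈ F k) ∧ ∑ k ∈ s, Finsupp.single (g k) 1 = Finsupp.single j 1 + D

variable {F}

section HasTransversalLE

variable [Fintype ι] {e : σ →₀ ℕ}

lemma sum_single_one_apply_congr {g g' : ι → σ} {l : σ}
    (h : ∀ i, g i = l ∨ g' i = l → g i = g' i) :
    (∑ i, Finsupp.single (g i) 1) l = (∑ i, Finsupp.single (g' i) (1 : ℕ)) l := by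
  classical
  simp only [Finsupp.finsetSum_apply, Finsupp.single_apply]
  refine sum_congr rfl fun i _ => if_congr ⟨fun hi => ?_, fun hi => ?_⟩ rfl rfl
  · rwa [← h i (.inl hi)]
  · rwa [h i (.inr hi)]

lemma degree_sum_single_one (g : ι → σ) :
    (∑ i, Finsupp.single (g i) 1).degree = Fintype.card ι := by
  simp [map_sum, Finsupp.degree_single]

lemma HasTransversalLE.of_single_add {j : σ} (h : HasTransversalLE F (Finsupp.single j 1 + e))
    (hj : ∀ i, j ∉ F i) : HasTransversalLE F e := by
  obtain ⟨g, hg, hle⟩ := h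
  refine ⟨g, hg, fun l => ?_⟩
  by_cases hjl : j = l
  · subst hjl
    rw [Finsupp.finsetSum_apply,
      sum_eq_zero fun i _ => Finsupp.single_eq_of_ne' fun h : g i = j => hj i (h ▸ hg i)]
    exact Nat.zero_le _
  · exact apply_le_of_le_single_add hle hjl

/-- Glue the witness for `x_{j₂} x^e` on `A` to the witness for `x_{j₁} x^e` off `A`: the
separation keeps each extra variable `x_{jₖ}` on the side where its witness is not used. -/
lemma HasTransversalLE.of_single_add_of_separated {A : Set ι}
    (hA : ∀ a ∈ A, ∀ b ∉ A, Disjoint (F a) (F b)) {a b : ι} (ha : a ∈ A) (hb : b ∉ A)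
    {j₁ j₂ : σ} (hj₁ : j₁ ∈ F a) (hj₂ : j₂ ∈ F b)
    (h₁ : HasTransversalLE F (Finsupp.single j₁ 1 + e))
    (h₂ : HasTransversalLE F (Finsupp.single j₂ 1 + e)) : HasTransversalLE F e := by
  classical
  obtain ⟨g₁, hg₁, hle₁⟩ := h₁
  obtain ⟨g₂, hg₂, hle₂⟩ := h₂
  set T := {l | ∃ a ∈ A, l ∈ F a}
  have side : ∀ i, ∀ x ∈ F i, (x ∈ T ↔ i ∈ A) := by
    refine fun i x hx => ⟨fun ⟨a, ha, hxa⟩ => ?_, fun hi => ⟨i, hi, hx⟩⟩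
    by_contra hi
    exact disjoint_left.1 (hA a ha i hi) hxa hx
  let g : ι → σ := fun i => if i ∈ A then g₂ i else g₁ i
  have hg : ∀ i, g i ∈ F i := fun i => by by_cases hi : i ∈ A <;> simp [g, hi, hg₁, hg₂]
  refine ⟨g, hg, fun l => ?_⟩
  by_cases hl : l ∈ T
  · rw [sum_single_one_apply_congr (g' := g₂) fun i hi => ?_]
    · exact apply_le_of_le_single_add hle₂ fun h => hb ((side b _ hj₂).1 (h ▸ hl))
    have hli : l ∈ F i := by rcases hi with hi | hi <;> [exact hi ▸ hg i; exact hi ▸ hg₂ i]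
    simp [g, (side i l hli).1 hl]
  · rw [sum_single_one_apply_congr (g' := g₁) fun i hi => ?_]
    · exact apply_le_of_le_single_add hle₁ fun h => hl (h ▸ (side a _ hj₁).2 ha)
    have hli : l ∈ F i := by rcases hi with hi | hi <;> [exact hi ▸ hg i; exact hi ▸ hg₁ i]
    simp [g, mt (side i l hli).2 hl]

lemma biUnion_eq_univ_of_hasTransversalLE_single_add [Fintype σ] [DecidableEq σ]
    (he : ¬HasTransversalLE F e) (h : ∀ j, HasTransversalLE F (Finsupp.single j 1 + e)) :
    univ.biUnion F = univ := by
  refine eq_univ_iff_forall.2 fun j => ?_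
  by_contra hj
  simp only [mem_biUnion, mem_univ, true_and, not_exists] at hj
  exact he ((h j).of_single_add hj)

end HasTransversalLE

lemma isTransversalCofactor_singleton (i : ι) : IsTransversalCofactor F {i} 0 := by
  intro i' hi' j hj
  rw [mem_singleton] at hi'
  subst hi'
  exact ⟨fun _ => j, by simpa using hj, by simp⟩

lemma IsTransversalCofactor.insert_add_single [DecidableEq ι] {s : Finset ι} {D : σ →₀ ℕ}
    (h : IsTransversalCofactor F s D) {a b : ι} (ha : a ∈ s) (hb : b ∉ s) {c : σ}
    (hca : c ∈ F a) (hcb : c ∈ F b) :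
    IsTransversalCofactor F (insert b s) (D + Finsupp.single c 1) := by
  have extend : ∀ g : ι → σ, (∀ k ∈ s, g k ∈ F k) → ∀ x ∈ F b,
      (∀ k ∈ insert b s, Function.update g b x k ∈ F k) ∧
      ∑ k ∈ insert b s, Finsupp.single (Function.update g b x k) 1 =
        Finsupp.single x 1 + ∑ k ∈ s, Finsupp.single (g k) 1 := by
    intro g hg x hx
    refine ⟨fun k hk => ?_, ?_⟩
    · rcases mem_insert.1 hk with rfl | hk
      · simpa using hx
      · rw [Function.update_of_ne (ne_of_mem_of_not_mem hk hb)]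
        exact hg k hk
    · rw [sum_insert hb, Function.update_self]
      congr 1
      exact sum_congr rfl fun k hk => by rw [Function.update_of_ne (ne_of_mem_of_not_mem hk hb)]
  intro i hi j hj
  rcases mem_insert.1 hi with rfl | hi
  · obtain ⟨g, hg, hsum⟩ := h a ha c hca
    obtain ⟨hmem, hsum'⟩ := extend g hg j hj
    exact ⟨_, hmem, by rw [hsum', hsum, add_comm D]⟩
  · obtain ⟨g, hg, hsum⟩ := h i hi j hj
    obtain ⟨hmem, hsum'⟩ := extend g hg c hcb
    exact ⟨_, hmem, by rw [hsum', hsum, add_left_comm, add_comm D]⟩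

/-- A cofactor set of maximal size is everything: otherwise an edge leaving it extends it. -/
lemma exists_isTransversalCofactor_univ [Fintype ι] [DecidableEq σ] {G : SimpleGraph ι}
    (hG : G.Connected) (hadj : ∀ a b, G.Adj a b → (F a ∩ F b).Nonempty) :
    ∃ D, IsTransversalCofactor F univ D := by
  classical
  obtain ⟨i₀⟩ := hG.nonempty
  set S := univ.filter fun s : Finset ι => ∃ D, IsTransversalCofactor F s D
  have hi₀ : {i₀} ∈ S := mem_filter.2 ⟨mem_univ _, 0, isTransversalCofactor_singleton i₀⟩
  obtain ⟨s, hs, hmax⟩ := exists_max_image S card ⟨_, hi₀⟩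
  obtain ⟨D, hD⟩ := (mem_filter.1 hs).2
  suffices s = univ from ⟨D, this ▸ hD⟩
  refine eq_univ_of_forall fun v => ?_
  by_contra hv
  obtain ⟨u, hu⟩ : s.Nonempty := card_pos.1 (hmax _ hi₀)
  obtain ⟨d, -, hds, hdv⟩ := (hG.preconnected u v).some.exists_boundary_dart (s : Set ι) hu hv
  obtain ⟨c, hc⟩ := hadj _ _ d.adj
  rw [mem_inter] at hc
  have := hmax _ (mem_filter.2 ⟨mem_univ _, _, hD.insert_add_single hds hdv hc.1 hc.2⟩)
  rw [card_insert_of_notMem hdv] at this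
  omega

lemma IsTransversalCofactor.hasTransversalLE_single_add [Fintype ι] {D : σ →₀ ℕ}
    (h : IsTransversalCofactor F univ D) {i : ι} {j : σ} (hj : j ∈ F i) :
    HasTransversalLE F (Finsupp.single j 1 + D) :=
  let ⟨g, hg, hsum⟩ := h i (mem_univ i) j hj
  ⟨g, fun k => hg k (mem_univ k), hsum.le⟩

/-- `x^D` has degree `r - 1`, one less than any transversal monomial. -/
lemma IsTransversalCofactor.not_hasTransversalLE [Fintype ι] [Nonempty ι] {D : σ →₀ ℕ}
    (h : IsTransversalCofactor F univ D) : ¬HasTransversalLE F D := by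
  rintro ⟨g, hg, hle⟩
  obtain ⟨i⟩ := ‹Nonempty ι›
  obtain ⟨g', -, hsum⟩ := h i (mem_univ i) (g i) (hg i)
  have hdeg := congrArg Finsupp.degree hsum
  have hmono := Finsupp.degree_mono hle
  rw [degree_sum_single_one] at hdeg hmono
  rw [map_add, Finsupp.degree_single] at hdeg
  omega

end Transversal

section IntersectionGraph

variable {n r : ℕ} {F : Fin r → Finset (Fin n)}

lemma interGraph_adj {a b : Fin r} :
    (interGraph F).Adj a b ↔ a ≠ b ∧ (F a ∩ F b).Nonempty := by
  simp [interGraph, inter_comm (F b)]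

lemma interGraph_connected_of_hasTransversalLE_single_add (hF : ∀ i, (F i).Nonempty)
    {e : Fin n →₀ ℕ} (he : ¬HasTransversalLE F e)
    (h : ∀ j, HasTransversalLE F (Finsupp.single j 1 + e)) : (interGraph F).Connected := by
  rw [SimpleGraph.connected_iff]
  refine ⟨fun u v => ?_, ?_⟩
  · by_contra huv
    obtain ⟨j₁, hj₁⟩ := hF u
    obtain ⟨j₂, hj₂⟩ := hF v
    refine he (.of_single_add_of_separated (A := {k | (interGraph F).Reachable u k})
      (fun a ha b hb => ?_) .rfl huv hj₁ hj₂ (h j₁) (h j₂))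
    by_contra hab
    exact hb (ha.trans (interGraph_adj.2
      ⟨fun h : a = b => hb (h ▸ ha), not_disjoint_iff_nonempty_inter.1 hab⟩).reachable)
  · by_contra hempty
    rw [not_nonempty_iff] at hempty
    exact he ⟨isEmptyElim, isEmptyElim, by simp⟩

end IntersectionGraph

section PF

variable {K : Type} [Field K] {n : ℕ} {ι : Type*} [Fintype ι] {F : ι → Finset (Fin n)}

lemma prod_PF_eq_span :
    ∏ i, PF (K := K) (F i) = Ideal.span ((fun e => monomial e (1 : K)) ''
      {e | ∃ g : ι → Fin n, (∀ i, g i ∈ F i) ∧ ∑ i, Finsupp.single (g i) 1 = e}) := by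
  simp only [PF]
  rw [Ideal.prod_span]
  congr 1
  ext p
  rw [Set.mem_fintype_prod]
  constructor
  · rintro ⟨q, hq, rfl⟩
    choose g hg hgq using hq
    refine ⟨_, ⟨g, hg, rfl⟩, ?_⟩
    simp [monomial_sum_one, ← hgq, X]
  · rintro ⟨_, ⟨g, hg, rfl⟩, rfl⟩
    exact ⟨fun i => X (g i), fun i => ⟨g i, hg i, rfl⟩, by simp [monomial_sum_one, X]⟩

lemma mem_prod_PF_iff {f : MvPolynomial (Fin n) K} :
    f ∈ ∏ i, PF (F i) ↔ ∀ e ∈ f.support, HasTransversalLE F e := by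
  rw [prod_PF_eq_span, mem_ideal_span_monomial_image]
  exact forall₂_congr fun e _ => ⟨fun ⟨_, ⟨g, hg, rfl⟩, hle⟩ => ⟨g, hg, hle⟩,
    fun ⟨g, hg, hle⟩ => ⟨_, ⟨g, hg, rfl⟩, hle⟩⟩

lemma monomial_mem_prod_PF_iff {e : Fin n →₀ ℕ} :
    monomial e (1 : K) ∈ ∏ i, PF (F i) ↔ HasTransversalLE F e := by
  simp [mem_prod_PF_iff]

end PF

lemma idealOfVars_eq_ker_constantCoeff {σ R : Type*} [CommSemiring R] :
    idealOfVars σ R = RingHom.ker constantCoeff := by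
  ext p
  rw [← pow_one (idealOfVars σ R), mem_pow_idealOfVars_iff', RingHom.mem_ker, constantCoeff_eq]
  simp [Finsupp.degree_eq_zero_iff]

instance isMaximal_idealOfVars {σ K : Type*} [Field K] : (idealOfVars σ K).IsMaximal := by
  rw [idealOfVars_eq_ker_constantCoeff]
  exact RingHom.ker_isMaximal_of_surjective _ fun a => ⟨C a, constantCoeff_C _ a⟩

lemma colon_bot_quotient_mk {R : Type*} [CommRing R] (I : Ideal R) (w : R) :
    (⊥ : Submodule R (R ⧸ I)).colon {Ideal.Quotient.mk I w} = I.colon {w} := by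
  ext f
  rw [Submodule.mem_colon_singleton, Submodule.mem_colon_singleton, Submodule.mem_bot,
    Algebra.smul_def, Ideal.Quotient.algebraMap_eq, ← map_mul, Ideal.Quotient.eq_zero_iff_mem,
    smul_eq_mul]

lemma mem_associatedPrimes_quotient_iff_of_isMaximal {R : Type*} [CommRing R] [IsNoetherianRing R]
    {I P : Ideal R} [hP : P.IsMaximal] :
    P ∈ associatedPrimes R (R ⧸ I) ↔ ∃ w ∉ I, P ≤ I.colon {w} := by
  have one_mem_colon : ∀ w, 1 ∈ I.colon {w} ↔ w ∈ I := fun w => by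
    rw [Submodule.mem_colon_singleton, smul_eq_mul, one_mul]
  constructor
  · intro h
    obtain ⟨-, x, hx⟩ := isAssociatedPrime_iff.1 h
    obtain ⟨w, rfl⟩ := Ideal.Quotient.mk_surjective x
    rw [colon_bot_quotient_mk] at hx
    exact ⟨w, fun hw => hP.ne_top (by rwa [hx, Ideal.eq_top_iff_one, one_mem_colon]), hx.le⟩
  · rintro ⟨w, hw, hle⟩
    refine isAssociatedPrime_iff.2 ⟨hP.isPrime, Ideal.Quotient.mk I w, ?_⟩
    rw [colon_bot_quotient_mk]
    exact hP.eq_of_le (fun htop => hw ((one_mem_colon w).1 (htop ▸ Submodule.mem_top))) hle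

theorem stmt7_general {K : Type} [Field K] {n r : ℕ}
    (F : Fin r → Finset (Fin n)) (hF : ∀ i, (F i).Nonempty) :
    Ideal.span (Set.range (X : Fin n → MvPolynomial (Fin n) K)) ∈
        associatedPrimes (MvPolynomial (Fin n) K)
          (MvPolynomial (Fin n) K ⧸ ∏ i, PF (K := K) (F i)) ↔
      Finset.univ.biUnion F = Finset.univ ∧ (interGraph F).Connected := by
  rw [mem_associatedPrimes_quotient_iff_of_isMaximal]
  simp only [Ideal.span_le, Set.range_subset_iff, SetLike.mem_coe, Submodule.mem_colon_singleton,
    smul_eq_mul]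
  constructor
  · rintro ⟨w, hw, hwX⟩
    obtain ⟨e, he, hne⟩ : ∃ e ∈ w.support, ¬HasTransversalLE F e := by
      simpa [mem_prod_PF_iff] using hw
    have hshift : ∀ j, HasTransversalLE F (Finsupp.single j 1 + e) := fun j =>
      mem_prod_PF_iff.1 (hwX j) _ (by rwa [mem_support_iff, coeff_X_mul, ← mem_support_iff])
    exact ⟨biUnion_eq_univ_of_hasTransversalLE_single_add hne hshift,
      interGraph_connected_of_hasTransversalLE_single_add hF hne hshift⟩
  · rintro ⟨hcov, hconn⟩
    have := hconn.nonempty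
    obtain ⟨D, hD⟩ := exists_isTransversalCofactor_univ hconn fun _ _ h => (interGraph_adj.1 h).2
    refine ⟨monomial D 1, monomial_mem_prod_PF_iff.not.2 hD.not_hasTransversalLE, fun j => ?_⟩
    obtain ⟨i, -, hj⟩ := mem_biUnion.1 (hcov ▸ mem_univ j)
    rw [X, monomial_mul, one_mul, monomial_mem_prod_PF_iff]
    exact hD.hasTransversalLE_single_add hj

/-- For a transversal polymatroidal ideal `I = P_{F_1} ⋯ P_{F_r}`, the graded maximal ideal
is associated to `S/I` iff `⋃ F_i = [n]` and the intersection graph `G_I` is connected. -/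
theorem stmt7 {K : Type} [Field K] {n r : ℕ} (hr : 0 < r)
    (F : Fin r → Finset (Fin n)) (hF : ∀ i, (F i).Nonempty) :
    Ideal.span (Set.range (X : Fin n → MvPolynomial (Fin n) K)) ∈
        associatedPrimes (MvPolynomial (Fin n) K)
          (MvPolynomial (Fin n) K ⧸ ∏ i, PF (K := K) (F i)) ↔
      Finset.univ.biUnion F = Finset.univ ∧ (interGraph F).Connected :=
  stmt7_general F hF
end

section
/- Let F = {A_1,…,A_r} be a family of nonempty subsets of [n] such that A ∪ B ∈ F whenever A, B ∈ F and A ∩ B ≠ ∅. Then the transversal polymatroidal ideal I = P_{A_1} ⋯ P_{A_r} satisfies Ass(S/I) = { P_A : A ∈ F }. -/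
/-!
The order of vanishing `ord_A` along the coordinate subspace `{x_A = 0}` is additive on
products, so `Q_A(d) = {f | d ≤ ord_A f}` is `P_A`-primary for `d ≥ 1`, with `Q_A(1) = P_A`.

Put `d(A) = #{B ∈ 𝓕 | B ⊆ A}`; then `I = ⋂_{A ∈ 𝓕} Q_A(d(A))`. Indeed, a monomial `x^s` of the
intersection has `∑_{i ∈ A} s_i ≥ d(A)` for all `A ∈ 𝓕`. For a subfamily with union `W`, the
maximal members of `{B ∈ 𝓕 | B ⊆ W}` are pairwise disjoint by the closure hypothesis, so these
inequalities give Hall's condition for choosing `c(B) ∈ B` with `∏_B x_{c(B)} ∣ x^s`. Hence every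
associated prime is some `P_A`. Conversely, choosing `c(B) ∉ A` whenever `B ⊄ A`, the monomial
`u = ∏_{B ≠ A} x_{c(B)}` has `ord_A u = d(A) - 1`, and `(I : u) = P_A`.
-/

open MvPolynomial

open Finset

theorem Ideal.isAssociatedPrime_quotient_iff {R : Type*} [CommRing R] [IsNoetherianRing R]
    {I P : Ideal R} : IsAssociatedPrime P (R ⧸ I) ↔ P.IsPrime ∧ ∃ f : R, P = I.colon {f} := by
  have key (f : R) : (⊥ : Submodule R (R ⧸ I)).colon {Ideal.Quotient.mk I f} = I.colon {f} := by
    ext r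
    simp [Submodule.mem_colon_singleton, Algebra.smul_def, ← map_mul,
      Ideal.Quotient.eq_zero_iff_mem]
  simp_rw [isAssociatedPrime_iff, Ideal.Quotient.mk_surjective.exists, key]

theorem Ideal.exists_eq_radical_of_mem_associatedPrimes_quotient_finsetInf {R ι : Type*}
    [CommRing R] [IsNoetherianRing R] {s : Finset ι} {q : ι → Ideal R}
    (hq : ∀ i ∈ s, (q i).IsPrimary) {P : Ideal R} (hP : P ∈ associatedPrimes R (R ⧸ s.inf q)) :
    ∃ i ∈ s, P = (q i).radical := by
  obtain ⟨hPprime, f, rfl⟩ := isAssociatedPrime_quotient_iff.mp hP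
  rw [Submodule.colon_finsetInf] at hPprime ⊢
  obtain ⟨i, hi, he⟩ := Ideal.eq_inf_of_isPrime_inf hPprime
  refine ⟨i, hi, he ▸ IsAssociatedPrime.eq_radical (hq i hi) ?_⟩
  exact isAssociatedPrime_quotient_iff.mpr ⟨he ▸ hPprime, f, rfl⟩

section Transversal

variable {σ : Type*} [DecidableEq σ] {F : Finset (Finset σ)}

theorem disjoint_of_maximal_of_union_mem
    (hF : ∀ A ∈ F, ∀ B ∈ F, (A ∩ B).Nonempty → A ∪ B ∈ F) {M N : Finset σ}
    (hM : Maximal (· ∈ F) M) (hN : Maximal (· ∈ F) N) (hMN : M ≠ N) : Disjoint M N := by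
  by_contra h
  have hU := hF M hM.prop N hN.prop (not_disjoint_iff_nonempty_inter.mp h)
  exact hMN ((hM.eq_of_le hU subset_union_left).trans (hN.eq_of_le hU subset_union_right).symm)

theorem card_le_sum_biUnion_of_union_mem
    (hF : ∀ A ∈ F, ∀ B ∈ F, (A ∩ B).Nonempty → A ∪ B ∈ F) (m : σ → ℕ)
    (hm : ∀ A ∈ F, #{B ∈ F | B ⊆ A} ≤ ∑ i ∈ A, m i) {G : Finset (Finset σ)} (hG : G ⊆ F) :
    #G ≤ ∑ i ∈ G.biUnion id, m i := by
  classical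
  set W := G.biUnion id
  set S := {B ∈ F | B ⊆ W}
  set T := {M ∈ S | Maximal (· ∈ S) M}
  have hS : ∀ A ∈ S, ∀ B ∈ S, (A ∩ B).Nonempty → A ∪ B ∈ S := by
    simp only [S, mem_filter]
    exact fun A hA B hB hAB => ⟨hF A hA.1 B hB.1 hAB, union_subset hA.2 hB.2⟩
  have hT : ∀ M ∈ T, M ∈ F ∧ M ⊆ W := fun M hM => mem_filter.mp (mem_filter.mp hM).1
  have hcover : G ⊆ T.biUnion fun M => {B ∈ G | B ⊆ M} := by
    intro C hC
    obtain ⟨M, hCM, hM⟩ := S.exists_le_maximal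
      (mem_filter.mpr ⟨hG hC, subset_biUnion_of_mem id hC⟩)
    exact mem_biUnion.mpr ⟨M, mem_filter.mpr ⟨hM.prop, hM⟩, mem_filter.mpr ⟨hC, hCM⟩⟩
  have hdisj : (T : Set (Finset σ)).PairwiseDisjoint id := fun M hM N hN hMN =>
    disjoint_of_maximal_of_union_mem hS (mem_filter.mp hM).2 (mem_filter.mp hN).2 hMN
  calc #G ≤ #(T.biUnion fun M => {B ∈ G | B ⊆ M}) := card_le_card hcover
    _ ≤ ∑ M ∈ T, #{B ∈ G | B ⊆ M} := card_biUnion_le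
    _ ≤ ∑ M ∈ T, ∑ i ∈ M, m i := sum_le_sum fun M hM =>
        (card_le_card (filter_subset_filter _ hG)).trans (hm M (hT M hM).1)
    _ = ∑ i ∈ T.biUnion id, m i := (sum_biUnion hdisj).symm
    _ ≤ ∑ i ∈ W, m i := sum_le_sum_of_subset (biUnion_subset.mpr fun M hM => (hT M hM).2)

theorem exists_transversal_of_union_mem
    (hF : ∀ A ∈ F, ∀ B ∈ F, (A ∩ B).Nonempty → A ∪ B ∈ F) (m : σ → ℕ)
    (hm : ∀ A ∈ F, #{B ∈ F | B ⊆ A} ≤ ∑ i ∈ A, m i) :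
    ∃ c : F → σ, (∀ B : F, c B ∈ (B : Finset σ)) ∧ ∀ i, #{B : F | c B = i} ≤ m i := by
  -- Hall's theorem, with `m i` copies `⟨i, k⟩`, `k < m i`, of each point `i`.
  let t : F → Finset (Σ _ : σ, ℕ) := fun B => (B : Finset σ).sigma fun i => range (m i)
  have hall (s : Finset F) : #s ≤ #(s.biUnion t) := by
    set G := s.map (.subtype (· ∈ F))
    have hG : G ⊆ F := fun B hB => by
      obtain ⟨B, -, rfl⟩ := mem_map.mp hB
      exact B.2
    have hst : s.biUnion t = (G.biUnion id).sigma fun i => range (m i) := by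
      ext ⟨i, k⟩
      simp only [t, G, mem_biUnion, mem_sigma, mem_map, mem_range]
      aesop
    rw [hst, card_sigma, ← card_map (.subtype (· ∈ F))]
    simp only [card_range]
    exact card_le_sum_biUnion_of_union_mem hF m hm hG
  obtain ⟨f, hf, hft⟩ := (all_card_le_biUnion_card_iff_exists_injective t).mp hall
  refine ⟨fun B => (f B).1, fun B : F => (mem_sigma.mp (hft B)).1, fun i => ?_⟩
  calc #{B : F | (f B).1 = i} ≤ #(range (m i)) := by
        refine card_le_card_of_injOn (fun B => (f B).2) (fun B hB => ?_) fun B hB B' hB' h => ?_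
        · have := (mem_sigma.mp (hft B)).2
          rwa [(mem_filter.mp hB).2] at this
        · exact hf (Sigma.ext ((mem_filter.mp hB).2.trans (mem_filter.mp hB').2.symm) (heq_of_eq h))
    _ = m i := card_range _

end Transversal

theorem Finsupp.weight_indicator_one {σ : Type*} (A : Finset σ) (s : σ →₀ ℕ) :
    Finsupp.weight ((A : Set σ).indicator 1) s = ∑ i ∈ A, s i := by
  classical
  rw [Finsupp.weight_apply, Finsupp.sum]
  simp only [Set.indicator_apply, mem_coe, Pi.one_apply, smul_eq_mul, mul_ite, mul_one, mul_zero]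
  rw [sum_ite_mem]
  exact sum_subset inter_subset_right fun i hiA hi => by simpa [hiA] using hi

namespace MvPolynomial

variable {σ R : Type*}

section VanishingOrder

variable [CommSemiring R]

/-- The order of vanishing of `f` along the coordinate subspace `{x_i = 0 | i ∈ A}`. -/
noncomputable def vanishingOrder (A : Set σ) (f : MvPolynomial σ R) : ℕ∞ :=
  (f : MvPowerSeries σ R).weightedOrder (A.indicator 1)

theorem le_vanishingOrder_mul (A : Set σ) (f g : MvPolynomial σ R) :
    vanishingOrder A f + vanishingOrder A g ≤ vanishingOrder A (f * g) := by
  rw [vanishingOrder, vanishingOrder, vanishingOrder, coe_mul]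
  exact MvPowerSeries.le_weightedOrder_mul _

theorem vanishingOrder_le_weight (A : Set σ) {f : MvPolynomial σ R} {s : σ →₀ ℕ}
    (hs : s ∈ f.support) : vanishingOrder A f ≤ (Finsupp.weight (A.indicator 1) s : ℕ) :=
  MvPowerSeries.weightedOrder_le (f := (f : MvPowerSeries σ R)) _
    (by rwa [coeff_coe, ← mem_support_iff])

theorem vanishingOrder_X [Nontrivial R] (A : Set σ) (i : σ) [Decidable (i ∈ A)] :
    vanishingOrder A (X i : MvPolynomial σ R) = if i ∈ A then 1 else 0 := by
  rw [vanishingOrder, coe_X, MvPowerSeries.X,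
    MvPowerSeries.weightedOrder_monomial_of_ne_zero _ one_ne_zero, Finsupp.weight_single,
    Set.indicator_apply]
  split_ifs <;> simp

/-- This is `Ideal.span (X '' A) ^ d`; defining it through the order makes it visibly primary. -/
def vanishingOrderIdeal (A : Set σ) (d : ℕ) : Ideal (MvPolynomial σ R) where
  carrier := {f | d ≤ vanishingOrder A f}
  add_mem' hf hg := le_trans (le_min hf hg) (MvPowerSeries.min_weightedOrder_le_add _)
  zero_mem' := by simp [vanishingOrder]
  smul_mem' c f hf := le_trans (le_add_left hf) (le_vanishingOrder_mul A c f)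

theorem mem_vanishingOrderIdeal {A : Set σ} {d : ℕ} {f : MvPolynomial σ R} :
    f ∈ vanishingOrderIdeal A d ↔ (d : ℕ∞) ≤ vanishingOrder A f :=
  Iff.rfl

theorem vanishingOrderIdeal_zero (A : Set σ) : vanishingOrderIdeal (R := R) A 0 = ⊤ :=
  eq_top_iff.mpr fun f _ => by simp [mem_vanishingOrderIdeal]

theorem vanishingOrderIdeal_antitone (A : Set σ) :
    Antitone (vanishingOrderIdeal (R := R) A) := fun _ _ hde _ hf =>
  mem_vanishingOrderIdeal.mpr ((Nat.cast_le.mpr hde).trans (mem_vanishingOrderIdeal.mp hf))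

theorem vanishingOrderIdeal_mul_le (A : Set σ) (d e : ℕ) :
    vanishingOrderIdeal A d * vanishingOrderIdeal A e ≤ vanishingOrderIdeal (R := R) A (d + e) :=
  Ideal.mul_le.mpr fun f hf g hg => by
    rw [mem_vanishingOrderIdeal, Nat.cast_add]
    exact (add_le_add hf hg).trans (le_vanishingOrder_mul A f g)

theorem prod_vanishingOrderIdeal_le {ι : Type*} (A : Set σ) (s : Finset ι) (e : ι → ℕ) :
    ∏ i ∈ s, vanishingOrderIdeal (R := R) A (e i) ≤ vanishingOrderIdeal A (∑ i ∈ s, e i) := by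
  induction s using Finset.cons_induction with
  | empty => simp [vanishingOrderIdeal_zero]
  | cons i s hi ih =>
    rw [prod_cons, sum_cons]
    exact (Ideal.mul_mono_right ih).trans (vanishingOrderIdeal_mul_le A _ _)

theorem pow_mem_vanishingOrderIdeal {A : Set σ} {f : MvPolynomial σ R}
    (hf : f ∈ vanishingOrderIdeal A 1) (d : ℕ) : f ^ d ∈ vanishingOrderIdeal A d := by
  rw [mem_vanishingOrderIdeal, vanishingOrder, coe_pow]
  refine le_trans ?_ (MvPowerSeries.le_weightedOrder_pow _ d)
  simpa [vanishingOrder] using nsmul_le_nsmul_right (mem_vanishingOrderIdeal.mp hf) d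

theorem vanishingOrder_eq_zero_of_notMem {A : Set σ} {f : MvPolynomial σ R}
    (hf : f ∉ vanishingOrderIdeal A 1) : vanishingOrder A f = 0 := by
  rwa [mem_vanishingOrderIdeal, Nat.cast_one, Order.one_le_iff_ne_zero, not_not] at hf

theorem vanishingOrderIdeal_one [Nontrivial R] (A : Set σ) :
    vanishingOrderIdeal A 1 = Ideal.span (X '' A : Set (MvPolynomial σ R)) := by
  classical
  refine le_antisymm (fun f hf => mem_ideal_span_X_image.mpr fun s hs => ?_) ?_
  · have h := (mem_vanishingOrderIdeal.mp hf).trans (vanishingOrder_le_weight A hs)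
    rw [Nat.cast_le, Nat.one_le_iff_ne_zero, Finsupp.weight_apply, Finsupp.sum] at h
    obtain ⟨i, -, hi⟩ := Finset.exists_ne_zero_of_sum_ne_zero h
    by_cases hiA : i ∈ A
    · exact ⟨i, hiA, fun h0 => hi (by simp [h0])⟩
    · simp [hiA] at hi
  · rw [Ideal.span_le]
    rintro _ ⟨i, hi, rfl⟩
    simp [mem_vanishingOrderIdeal, vanishingOrder_X, hi]

variable [NoZeroDivisors R]

theorem vanishingOrder_mul (A : Set σ) (f g : MvPolynomial σ R) :
    vanishingOrder A (f * g) = vanishingOrder A f + vanishingOrder A g := by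
  rw [vanishingOrder, vanishingOrder, vanishingOrder, coe_mul, MvPowerSeries.weightedOrder_mul]

variable [Nontrivial R]

theorem vanishingOrder_prod {ι : Type*} (A : Set σ) (s : Finset ι) (f : ι → MvPolynomial σ R) :
    vanishingOrder A (∏ i ∈ s, f i) = ∑ i ∈ s, vanishingOrder A (f i) := by
  rw [vanishingOrder, ← coeToMvPowerSeries.ringHom_apply, map_prod,
    MvPowerSeries.weightedOrder_prod]
  rfl

instance isPrime_vanishingOrderIdeal_one (A : Set σ) :
    (vanishingOrderIdeal (R := R) A 1).IsPrime := by
  refine ⟨(Ideal.ne_top_iff_one _).mpr fun h => ?_, fun {f g} hfg => ?_⟩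
  · simp [mem_vanishingOrderIdeal, vanishingOrder] at h
  · by_contra! h
    rw [mem_vanishingOrderIdeal, vanishingOrder_mul, vanishingOrder_eq_zero_of_notMem h.1,
      vanishingOrder_eq_zero_of_notMem h.2] at hfg
    simp at hfg

theorem radical_vanishingOrderIdeal (A : Set σ) {d : ℕ} (hd : d ≠ 0) :
    (vanishingOrderIdeal (R := R) A d).radical = vanishingOrderIdeal A 1 :=
  le_antisymm
    ((Ideal.radical_mono (vanishingOrderIdeal_antitone A (Nat.one_le_iff_ne_zero.mpr hd))).trans
      (isPrime_vanishingOrderIdeal_one A).radical.le)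
    fun _ hf => ⟨d, pow_mem_vanishingOrderIdeal hf d⟩

theorem isPrimary_vanishingOrderIdeal (A : Set σ) {d : ℕ} (hd : d ≠ 0) :
    (vanishingOrderIdeal (R := R) A d).IsPrimary := by
  rw [Ideal.isPrimary_iff, radical_vanishingOrderIdeal A hd]
  refine ⟨fun h => Ideal.IsPrime.ne_top' (I := vanishingOrderIdeal (R := R) A 1) ?_,
    fun {_ g} hfg => or_iff_not_imp_right.mpr fun hg => ?_⟩
  · exact top_le_iff.mp (h ▸ vanishingOrderIdeal_antitone A (Nat.one_le_iff_ne_zero.mpr hd))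
  · rwa [mem_vanishingOrderIdeal, vanishingOrder_mul, vanishingOrder_eq_zero_of_notMem hg,
      add_zero] at hfg

end VanishingOrder

section TransversalIdeal

variable [CommSemiring R] [DecidableEq σ] {F : Finset (Finset σ)}

theorem monomial_mem_prod_span_X (c : F → σ) (hc : ∀ B : F, c B ∈ (B : Finset σ))
    {s : σ →₀ ℕ} (hs : ∀ i, #{B : F | c B = i} ≤ s i) (a : R) :
    monomial s a ∈ ∏ B ∈ F, Ideal.span (X '' (B : Set σ)) := by
  set t := ∑ B : F, Finsupp.single (c B) 1
  have ht : t ≤ s := fun i => by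
    simpa [t, Finsupp.finsetSum_apply, Finsupp.single_apply, sum_boole] using hs i
  have hprod : ∏ B : F, (X (c B) : MvPolynomial σ R) = monomial t 1 := by
    rw [monomial_sum_one]
    rfl
  have : monomial s a = monomial (s - t) a * ∏ B : F, (X (c B) : MvPolynomial σ R) := by
    rw [hprod, monomial_mul, tsub_add_cancel_of_le ht, mul_one]
  rw [this, ← prod_coe_sort F]
  exact Ideal.mul_mem_left _ _ (Ideal.prod_mem_prod fun B _ => Ideal.subset_span ⟨c B, hc B, rfl⟩)

variable [Nontrivial R]

theorem prod_span_X_le_vanishingOrderIdeal (F : Finset (Finset σ)) (A : Finset σ) :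
    ∏ B ∈ F, Ideal.span (X '' (B : Set σ)) ≤
      vanishingOrderIdeal (R := R) (A : Set σ) #{B ∈ F | B ⊆ A} := by
  calc ∏ B ∈ F, Ideal.span (X '' (B : Set σ))
      ≤ ∏ B ∈ F, vanishingOrderIdeal (R := R) (A : Set σ) (if B ⊆ A then 1 else 0) :=
        prod_le_prod' fun B _ => by
          split_ifs with hBA
          · rw [vanishingOrderIdeal_one]
            exact Ideal.span_mono (Set.image_mono (coe_subset.mpr hBA))
          · rw [vanishingOrderIdeal_zero]
            exact le_top
    _ ≤ vanishingOrderIdeal (A : Set σ) #{B ∈ F | B ⊆ A} := by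
        have := prod_vanishingOrderIdeal_le (R := R) (A : Set σ) F fun B => if B ⊆ A then 1 else 0
        rwa [sum_boole, Nat.cast_id] at this

theorem prod_span_X_eq_inf (hF : ∀ A ∈ F, ∀ B ∈ F, (A ∩ B).Nonempty → A ∪ B ∈ F) :
    ∏ B ∈ F, Ideal.span (X '' (B : Set σ)) =
      F.inf fun A => vanishingOrderIdeal (R := R) (A : Set σ) #{B ∈ F | B ⊆ A} := by
  refine le_antisymm (Finset.le_inf fun A _ => prod_span_X_le_vanishingOrderIdeal F A)
    fun f hf => ?_
  rw [as_sum f]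
  refine sum_mem fun s hs => ?_
  have hm : ∀ A ∈ F, #{B ∈ F | B ⊆ A} ≤ ∑ i ∈ A, s i := fun A hA => by
    have := (mem_vanishingOrderIdeal.mp (Submodule.mem_finsetInf.mp hf A hA)).trans
      (vanishingOrder_le_weight (A : Set σ) hs)
    rwa [Nat.cast_le, Finsupp.weight_indicator_one] at this
  obtain ⟨c, hc, hcs⟩ := exists_transversal_of_union_mem hF s hm
  exact monomial_mem_prod_span_X c hc hcs _

variable [NoZeroDivisors R]

theorem exists_colon_eq_span_X (hne : ∀ A ∈ F, A.Nonempty) {A : Finset σ} (hA : A ∈ F) :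
    ∃ u : MvPolynomial σ R,
      (∏ B ∈ F, Ideal.span (X '' (B : Set σ))).colon {u} = Ideal.span (X '' (A : Set σ)) := by
  obtain ⟨i₀, -⟩ := hne A hA
  have : Nonempty σ := ⟨i₀⟩
  have hpick : ∀ B ∈ F, ∃ i ∈ B, (i ∈ A ↔ B ⊆ A) := fun B hB => by
    by_cases hBA : B ⊆ A
    · obtain ⟨i, hi⟩ := hne B hB
      exact ⟨i, hi, iff_of_true (hBA hi) hBA⟩
    · obtain ⟨i, hiB, hiA⟩ := not_subset.mp hBA
      exact ⟨i, hiB, iff_of_false hiA hBA⟩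
  -- `c B ∉ A` unless `B ⊆ A`, so `u` has order `#{B ∈ F.erase A | B ⊆ A} < #{B ∈ F | B ⊆ A}`.
  choose! c hcB hcA using hpick
  refine ⟨∏ B ∈ F.erase A, X (c B), le_antisymm (fun g hg => ?_) ?_⟩
  · rw [Submodule.mem_colon_singleton, smul_eq_mul] at hg
    rw [← vanishingOrderIdeal_one]
    by_contra hgA
    have hord := mem_vanishingOrderIdeal.mp (prod_span_X_le_vanishingOrderIdeal F A hg)
    rw [vanishingOrder_mul, vanishingOrder_eq_zero_of_notMem hgA, zero_add,
      vanishingOrder_prod] at hord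
    simp only [vanishingOrder_X, mem_coe, sum_boole] at hord
    rw [filter_congr fun B hB => hcA B (mem_of_mem_erase hB), filter_erase, Nat.cast_le] at hord
    exact (card_erase_lt_of_mem (mem_filter.mpr ⟨hA, subset_rfl⟩ : A ∈ {B ∈ F | B ⊆ A})).not_ge
      hord
  · rw [Ideal.span_le]
    rintro _ ⟨i, hi, rfl⟩
    rw [SetLike.mem_coe, Submodule.mem_colon_singleton, smul_eq_mul, ← mul_prod_erase F _ hA]
    exact Ideal.mul_mem_mul (Ideal.subset_span ⟨i, hi, rfl⟩)
      (Ideal.prod_mem_prod fun B hB => Ideal.subset_span ⟨c B, hcB B (mem_of_mem_erase hB), rfl⟩)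

end TransversalIdeal

theorem associatedPrimes_quotient_prod_span_X [DecidableEq σ] [Finite σ] [CommRing R]
    [IsDomain R] [IsNoetherianRing R] (F : Finset (Finset σ)) (hne : ∀ A ∈ F, A.Nonempty)
    (hF : ∀ A ∈ F, ∀ B ∈ F, (A ∩ B).Nonempty → A ∪ B ∈ F) :
    associatedPrimes (MvPolynomial σ R)
        (MvPolynomial σ R ⧸ ∏ A ∈ F, Ideal.span (X '' (A : Set σ) : Set (MvPolynomial σ R))) =
      {Q | ∃ A ∈ F, Q = Ideal.span (X '' (A : Set σ))} := by
  have hd : ∀ A ∈ F, #{B ∈ F | B ⊆ A} ≠ 0 := fun A hA =>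
    card_ne_zero_of_mem (mem_filter.mpr ⟨hA, subset_rfl⟩ : A ∈ {B ∈ F | B ⊆ A})
  ext P
  constructor
  · intro hP
    rw [prod_span_X_eq_inf hF] at hP
    obtain ⟨A, hA, rfl⟩ := Ideal.exists_eq_radical_of_mem_associatedPrimes_quotient_finsetInf
      (fun A hA => isPrimary_vanishingOrderIdeal (R := R) _ (hd A hA)) hP
    exact ⟨A, hA, by rw [radical_vanishingOrderIdeal _ (hd A hA), vanishingOrderIdeal_one]⟩
  · rintro ⟨A, hA, rfl⟩
    obtain ⟨u, hu⟩ := exists_colon_eq_span_X (R := R) hne hA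
    refine Ideal.isAssociatedPrime_quotient_iff.mpr ⟨?_, u, hu.symm⟩
    rw [← vanishingOrderIdeal_one]
    infer_instance

end MvPolynomial

theorem stmt11_general {K : Type} [Field K] {n : ℕ} (𝓕 : Finset (Finset (Fin n)))
    (hne : ∀ A ∈ 𝓕, A.Nonempty)
    (hclosed : ∀ A ∈ 𝓕, ∀ B ∈ 𝓕, (A ∩ B).Nonempty → A ∪ B ∈ 𝓕) :
    associatedPrimes (MvPolynomial (Fin n) K)
        (MvPolynomial (Fin n) K ⧸ ∏ A ∈ 𝓕, PF (K := K) A) =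
      {Q | ∃ A ∈ 𝓕, Q = PF (K := K) A} :=
  associatedPrimes_quotient_prod_span_X 𝓕 hne hclosed

/-- If `𝓕 = {A_1, …, A_r}` is a family of nonempty subsets of `[n]` closed under unions of
intersecting pairs, then the transversal polymatroidal ideal `I = P_{A_1} ⋯ P_{A_r}`
satisfies `Ass(S/I) = {P_A : A ∈ 𝓕}`. -/
theorem stmt11 {K : Type} [Field K] {n : ℕ} (𝓕 : Finset (Finset (Fin n)))
    (h𝓕 : 𝓕.Nonempty) (hne : ∀ A ∈ 𝓕, A.Nonempty)
    (hclosed : ∀ A ∈ 𝓕, ∀ B ∈ 𝓕, (A ∩ B).Nonempty → A ∪ B ∈ 𝓕) :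
    associatedPrimes (MvPolynomial (Fin n) K)
        (MvPolynomial (Fin n) K ⧸ ∏ A ∈ 𝓕, PF (K := K) A) =
      {Q | ∃ A ∈ 𝓕, Q = PF (K := K) A} :=
  stmt11_general 𝓕 hne hclosed
end

section
/- Let I = P_{F_1} ⋯ P_{F_r} be a transversal polymatroidal ideal. If P_A and P_B are associated primes of S/I with A ∩ B ≠ ∅, then P_{A ∪ B} is also an associated prime of S/I. -/
/-!
For a monomial ideal `I`, every associated prime is a colon `I : x^b` by a single monomial, so
`P_A ∈ Ass(S/I)` becomes a statement about exponent vectors. For `I = P_{F_1} ⋯ P_{F_r}` it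
holds iff `A` is the union of the `F_i` contained in it and the intersection graph of these
`F_i` is connected. If that graph split into two parts, exchanging the witnesses of
`x_{k₁} x^b ∈ I` and `x_{k₂} x^b ∈ I` for variables `k₁`, `k₂` of the two parts would give a
generator of `I` dividing `x^b` away from `A`. Conversely, one common variable per edge of a
spanning tree, times one variable outside `A` for every other `F_i`, gives a suitable `x^b`: a
generator of `I` uses a variable of `A` for every vertex of the tree, one more than `x^b` has.
Both conditions pass from `A` and `B` to `A ∪ B` as soon as `A ∩ B ≠ ∅`.
-/

open MvPolynomial

open Finset

section MonomialIdeal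

variable {σ R : Type*} [CommSemiring R]

theorem mul_monomial_mem_span_monomial_iff {E : Set (σ →₀ ℕ)} {g : MvPolynomial σ R}
    {b : σ →₀ ℕ} :
    g * monomial b 1 ∈ Ideal.span ((monomial · (1 : R)) '' E) ↔
      ∀ e ∈ g.support, ∃ s ∈ E, s ≤ e + b := by
  classical
  rw [mem_ideal_span_monomial_image]
  constructor
  · intro h e he
    apply h
    rw [mem_support_iff, coeff_mul_monomial', if_pos le_add_self, add_tsub_cancel_right, mul_one]
    exact mem_support_iff.mp he
  · intro h m hm
    rw [mem_support_iff, coeff_mul_monomial'] at hm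
    split_ifs at hm with hbm
    · simpa [tsub_add_cancel_of_le hbm] using h (m - b) (mem_support_iff.mpr (by simpa using hm))
    · exact absurd rfl hm

theorem exists_monomial_colon_eq {D E : Set (σ →₀ ℕ)} {f : MvPolynomial σ R}
    (hP : (Ideal.span ((monomial · (1 : R)) '' D)).IsPrime)
    (hf : Ideal.span ((monomial · (1 : R)) '' D) =
      (Ideal.span ((monomial · (1 : R)) '' E)).colon {f}) :
    ∃ b, Ideal.span ((monomial · (1 : R)) '' D) =
      (Ideal.span ((monomial · (1 : R)) '' E)).colon {monomial b 1} := by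
  set P := Ideal.span ((monomial · (1 : R)) '' D)
  set I := Ideal.span ((monomial · (1 : R)) '' E)
  have hle : ∀ b ∈ f.support, P ≤ I.colon {monomial b 1} := by
    intro b hb
    refine Ideal.span_le.mpr ?_
    rintro _ ⟨d, hd, rfl⟩
    have hdf : f * monomial d 1 ∈ I := by
      have : monomial d 1 ∈ P := Ideal.subset_span ⟨d, hd, rfl⟩
      rwa [hf, Submodule.mem_colon_singleton, smul_eq_mul, mul_comm] at this
    obtain ⟨s, hs, hsle⟩ := mul_monomial_mem_span_monomial_iff.mp hdf b hb
    rw [SetLike.mem_coe, Submodule.mem_colon_singleton, smul_eq_mul,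
      mul_monomial_mem_span_monomial_iff]
    intro e he
    rw [mem_singleton.mp (support_monomial_subset he)]
    exact ⟨s, hs, by rwa [add_comm]⟩
  have hinf : f.support.inf (fun b => I.colon {monomial b 1}) ≤ P := by
    intro g hg
    rw [hf, Submodule.mem_colon_singleton, smul_eq_mul, ← f.support_sum_monomial_coeff, mul_sum]
    refine Ideal.sum_mem _ fun b hb => ?_
    have hgb := Submodule.mem_finsetInf.mp hg b hb
    rw [Submodule.mem_colon_singleton, smul_eq_mul] at hgb
    rw [show g * monomial b (coeff b f) = C (coeff b f) * (g * monomial b 1) by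
      rw [mul_left_comm, C_mul_monomial, mul_one]]
    exact I.mul_mem_left _ hgb
  obtain ⟨b, hb, hbP⟩ := hP.inf_le'.mp hinf
  exact ⟨b, le_antisymm (hle b hb) hbP⟩

theorem bot_colon_quotient_mk {R : Type*} [CommRing R] (I : Ideal R) (f : R) :
    (⊥ : Submodule R (R ⧸ I)).colon {Ideal.Quotient.mk I f} = I.colon {f} := by
  ext g
  rw [Submodule.mem_colon_singleton, Submodule.mem_colon_singleton, Submodule.mem_bot, smul_eq_mul,
    Algebra.smul_def, Ideal.Quotient.algebraMap_eq, ← map_mul, Ideal.Quotient.eq_zero_iff_mem]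

end MonomialIdeal

section Transversal

variable {ι σ : Type*}

noncomputable def transversalExp (s : Finset ι) (c : ι → σ) : σ →₀ ℕ :=
  ∑ i ∈ s, Finsupp.single (c i) 1

theorem transversalExp_apply [DecidableEq σ] (s : Finset ι) (c : ι → σ) (j : σ) :
    transversalExp s c j = #{i ∈ s | c i = j} := by
  simp only [transversalExp, Finsupp.finsetSum_apply, Finsupp.single_apply]
  rw [card_filter]

theorem sum_transversalExp_apply [DecidableEq σ] (C : Finset σ) (s : Finset ι) (c : ι → σ) :
    ∑ k ∈ C, transversalExp s c k = #{i ∈ s | c i ∈ C} := by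
  simp only [transversalExp, Finsupp.finsetSum_apply, Finsupp.single_apply]
  rw [sum_comm, card_filter]
  simp

theorem transversalExp_apply_le [DecidableEq σ] {s : Finset ι} {c c' : ι → σ} {j : σ}
    (h : ∀ i ∈ s, c i = j → c' i = j) : transversalExp s c j ≤ transversalExp s c' j := by
  simp only [transversalExp_apply]
  exact card_le_card fun i hi => by
    rw [mem_filter] at hi ⊢
    exact ⟨hi.1, h i hi.1 hi.2⟩

theorem transversalExp_apply_le_of_le_single_add [DecidableEq σ] {s : Finset ι} {c c' : ι → σ}
    {b : σ →₀ ℕ} {j k : σ} (hc' : transversalExp s c' ≤ Finsupp.single k 1 + b) (hjk : j ≠ k)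
    (h : ∀ i ∈ s, c i = j → c' i = j) : transversalExp s c j ≤ b j :=
  calc transversalExp s c j ≤ transversalExp s c' j := transversalExp_apply_le h
    _ ≤ (Finsupp.single k 1 + b : σ →₀ ℕ) j := hc' j
    _ = b j := by simp [hjk.symm]

theorem transversalExp_insert_update [DecidableEq ι] {T : Finset ι} {j : ι} (hj : j ∉ T)
    (c : ι → σ) (x : σ) :
    transversalExp (insert j T) (Function.update c j x) =
      Finsupp.single x 1 + transversalExp T c := by
  rw [transversalExp, sum_insert hj, Function.update_self]
  congr 1
  exact sum_congr rfl fun i hi => by rw [Function.update_of_ne (ne_of_mem_of_not_mem hi hj)]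

theorem transversalExp_piecewise [Fintype ι] [DecidableEq ι] (T : Finset ι) (c d : ι → σ) :
    transversalExp univ (T.piecewise c d) = transversalExp T c + transversalExp Tᶜ d := by
  rw [transversalExp, ← sum_add_sum_compl T]
  congr 1
  · exact sum_congr rfl fun i hi => by rw [piecewise_eq_of_mem _ _ _ hi]
  · exact sum_congr rfl fun i hi => by rw [piecewise_eq_of_notMem _ _ _ (mem_compl.1 hi)]

end Transversal

section Connected

variable {ι σ : Type*} [DecidableEq ι] [DecidableEq σ] {F : ι → Finset σ}

def Crosses (F : ι → Finset σ) (T T₁ : Finset ι) : Prop :=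
  ∃ i ∈ T₁, ∃ j ∈ T \ T₁, (F i ∩ F j).Nonempty

def IntersectionConnected (F : ι → Finset σ) (T : Finset ι) : Prop :=
  ∀ T₁ ⊆ T, T₁.Nonempty → (T \ T₁).Nonempty → Crosses F T T₁

namespace IntersectionConnected

variable {S S' T : Finset ι}

theorem crosses_or (hS : IntersectionConnected F S) (hST : S ⊆ T) (T₁ : Finset ι) :
    Crosses F T T₁ ∨ S ⊆ T₁ ∨ Disjoint S T₁ := by
  by_cases hsub : S ⊆ T₁
  · exact Or.inr (Or.inl hsub)
  by_cases hdisj : Disjoint S T₁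
  · exact Or.inr (Or.inr hdisj)
  obtain ⟨i, hi, j, hj, hij⟩ := hS (S ∩ T₁) inter_subset_left
    (not_disjoint_iff_nonempty_inter.mp hdisj) (by rwa [sdiff_inter_self_left, sdiff_nonempty])
  rw [sdiff_inter_self_left] at hj
  exact Or.inl ⟨i, (mem_inter.1 hi).2, j, sdiff_subset_sdiff hST subset_rfl hj, hij⟩

theorem union (hS : IntersectionConnected F S) (hS' : IntersectionConnected F S')
    (hlink : ∃ i ∈ S, ∃ j ∈ S', (F i ∩ F j).Nonempty) :
    IntersectionConnected F (S ∪ S') := by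
  intro T₁ hT₁ ⟨x, hx⟩ hout
  obtain ⟨i, hi, j, hj, hij⟩ := hlink
  rcases hS.crosses_or subset_union_left T₁ with h | hin | hdisj <;>
    rcases hS'.crosses_or (subset_union_right (s₁ := S)) T₁ with h' | hin' | hdisj'
  all_goals first | exact h | exact h' | skip
  · exact absurd (union_subset hin hin') (sdiff_nonempty.mp hout)
  · exact ⟨i, hin hi, j, mem_sdiff.2 ⟨mem_union_right _ hj, disjoint_left.1 hdisj' hj⟩, hij⟩
  · exact ⟨j, hin' hj, i, mem_sdiff.2 ⟨mem_union_left _ hi, disjoint_left.1 hdisj hi⟩,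
      by rwa [inter_comm]⟩
  · rcases mem_union.1 (hT₁ hx) with hxS | hxS'
    · exact absurd hx (disjoint_left.1 hdisj hxS)
    · exact absurd hx (disjoint_left.1 hdisj' hxS')

theorem of_subset (hS : IntersectionConnected F S) (hST : S ⊆ T)
    (hadj : ∀ j ∈ T, ∃ i ∈ S, (F i ∩ F j).Nonempty) : IntersectionConnected F T := by
  intro T₁ hT₁ ⟨i, hi⟩ ⟨j, hj⟩
  rcases hS.crosses_or hST T₁ with h | hin | hdisj
  · exact h
  · obtain ⟨s, hs, hsj⟩ := hadj j (mem_sdiff.1 hj).1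
    exact ⟨s, hin hs, j, hj, hsj⟩
  · obtain ⟨s, hs, hsi⟩ := hadj i (hT₁ hi)
    exact ⟨i, hi, s, mem_sdiff.2 ⟨hST hs, disjoint_left.1 hdisj hs⟩, by rwa [inter_comm]⟩

end IntersectionConnected

end Connected

section Colon

variable {ι σ : Type*} {F : ι → Finset σ}

def IsUnionOfInner (F : ι → Finset σ) (A : Finset σ) : Prop :=
  ∀ k ∈ A, ∃ i, k ∈ F i ∧ F i ⊆ A

theorem IsUnionOfInner.union [DecidableEq σ] {A B : Finset σ} (hA : IsUnionOfInner F A)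
    (hB : IsUnionOfInner F B) : IsUnionOfInner F (A ∪ B) := by
  intro k hk
  rcases mem_union.1 hk with hkA | hkB
  · obtain ⟨i, hki, hi⟩ := hA k hkA
    exact ⟨i, hki, hi.trans subset_union_left⟩
  · obtain ⟨i, hki, hi⟩ := hB k hkB
    exact ⟨i, hki, hi.trans subset_union_right⟩

variable [Fintype ι]

def transversalExps (F : ι → Finset σ) : Set (σ →₀ ℕ) :=
  {e | ∃ c : ι → σ, (∀ i, c i ∈ F i) ∧ transversalExp univ c = e}

-- `x^e ∈ ∏ i, P_{F i}`
def Covers (F : ι → Finset σ) (e : σ →₀ ℕ) : Prop :=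
  ∃ s ∈ transversalExps F, s ≤ e

-- `I : x^b = P_A` for `I = ∏ i, P_{F i}`, tested on monomials `x^e`
def ColonEq (F : ι → Finset σ) (b : σ →₀ ℕ) (A : Finset σ) : Prop :=
  ∀ e, Covers F (e + b) ↔ ∃ k ∈ A, e k ≠ 0

def innerIdx [DecidableEq σ] (F : ι → Finset σ) (A : Finset σ) : Finset ι :=
  {i | F i ⊆ A}

theorem mem_innerIdx [DecidableEq σ] {A : Finset σ} {i : ι} : i ∈ innerIdx F A ↔ F i ⊆ A := by
  simp [innerIdx]

theorem innerIdx_mono [DecidableEq σ] {A B : Finset σ} (h : A ⊆ B) : innerIdx F A ⊆ innerIdx F B :=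
  fun _ hi => mem_innerIdx.2 ((mem_innerIdx.1 hi).trans h)

theorem intersectionConnected_innerIdx_union [DecidableEq ι] [DecidableEq σ]
    (hF : ∀ i, (F i).Nonempty) {A B : Finset σ}
    {k : σ} (hk : k ∈ A ∩ B) (hA : IsUnionOfInner F A) (hB : IsUnionOfInner F B)
    (hcA : IntersectionConnected F (innerIdx F A))
    (hcB : IntersectionConnected F (innerIdx F B)) :
    IntersectionConnected F (innerIdx F (A ∪ B)) := by
  obtain ⟨iA, hkA, hiA⟩ := hA k (mem_inter.1 hk).1
  obtain ⟨iB, hkB, hiB⟩ := hB k (mem_inter.1 hk).2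
  refine (hcA.union hcB ⟨iA, mem_innerIdx.2 hiA, iB, mem_innerIdx.2 hiB, k,
    mem_inter.2 ⟨hkA, hkB⟩⟩).of_subset
    (union_subset (innerIdx_mono subset_union_left) (innerIdx_mono subset_union_right))
    fun j hj => ?_
  obtain ⟨x, hx⟩ := hF j
  rcases mem_union.1 (mem_innerIdx.1 hj hx) with hxA | hxB
  · obtain ⟨i, hxi, hi⟩ := hA x hxA
    exact ⟨i, mem_union_left _ (mem_innerIdx.2 hi), x, mem_inter.2 ⟨hxi, hx⟩⟩
  · obtain ⟨i, hxi, hi⟩ := hB x hxB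
    exact ⟨i, mem_union_right _ (mem_innerIdx.2 hi), x, mem_inter.2 ⟨hxi, hx⟩⟩

namespace ColonEq

variable {A : Finset σ} {b : σ →₀ ℕ}

theorem exists_lt (h : ColonEq F b A) {c : ι → σ} (hc : ∀ i, c i ∈ F i) :
    ∃ j ∈ A, b j < transversalExp univ c j := by
  classical
  by_contra! hle
  have hcov : transversalExp univ c ≤ (transversalExp univ c).filter (· ∉ A) + b := by
    intro j
    by_cases hj : j ∈ A
    · simpa [Finsupp.filter_apply, hj] using hle j hj
    · simp [hj]
  obtain ⟨k, hk, hk0⟩ := (h _).mp ⟨_, ⟨c, hc, rfl⟩, hcov⟩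
  exact hk0 (Finsupp.filter_apply_neg _ _ (not_not_intro hk))

theorem exists_le_single_add (h : ColonEq F b A) {k : σ} (hk : k ∈ A) :
    ∃ c : ι → σ, (∀ i, c i ∈ F i) ∧ transversalExp univ c ≤ Finsupp.single k 1 + b := by
  obtain ⟨_, ⟨c, hc, rfl⟩, hle⟩ := (h (Finsupp.single k 1)).mpr ⟨k, hk, by simp⟩
  exact ⟨c, hc, hle⟩

theorem isUnionOfInner (h : ColonEq F b A) : IsUnionOfInner F A := by
  classical
  intro k hk
  by_contra! hout
  obtain ⟨c, hc, hle⟩ := h.exists_le_single_add hk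
  have hpick : ∀ i, ∃ x ∈ F i, x ≠ k ∧ (x ∈ A → x = c i) := by
    intro i
    by_cases hci : c i = k
    · obtain ⟨x, hx, hxA⟩ := not_subset.mp (hout i (hci ▸ hc i))
      exact ⟨x, hx, fun hxk => hxA (hxk ▸ hk), fun hxA' => absurd hxA' hxA⟩
    · exact ⟨c i, hc i, hci, fun _ => rfl⟩
  choose c' hc'F hc'k hc'A using hpick
  obtain ⟨j, hjA, hj⟩ := h.exists_lt hc'F
  by_cases hjk : j = k
  · subst hjk
    simp [transversalExp_apply, hc'k] at hj
  · exact hj.not_ge (transversalExp_apply_le_of_le_single_add hle hjk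
      fun i _ hi => (hc'A i (hi ▸ hjA)).symm.trans hi)

theorem intersectionConnected [DecidableEq ι] [DecidableEq σ] (hF : ∀ i, (F i).Nonempty)
    (h : ColonEq F b A) :
    IntersectionConnected F (innerIdx F A) := by
  intro T₁ hT₁ ⟨i₁, hi₁⟩ ⟨i₂, hi₂⟩
  by_contra! hsep
  have hsep' : ∀ i ∈ T₁, ∀ j ∈ innerIdx F A \ T₁, ∀ x ∈ F i, x ∉ F j := fun i hi j hj x hxi hxj =>
    hsep ⟨i, hi, j, hj, x, mem_inter.2 ⟨hxi, hxj⟩⟩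
  obtain ⟨k₁, hk₁⟩ := hF i₁
  obtain ⟨k₂, hk₂⟩ := hF i₂
  obtain ⟨c₁, hc₁, hle₁⟩ := h.exists_le_single_add (mem_innerIdx.1 (hT₁ hi₁) hk₁)
  obtain ⟨c₂, hc₂, hle₂⟩ := h.exists_le_single_add (mem_innerIdx.1 (mem_sdiff.1 hi₂).1 hk₂)
  have : Nonempty σ := ⟨k₁⟩
  have hout : ∀ i ∉ innerIdx F A, ∃ x ∈ F i, x ∉ A := fun i hi =>
    not_subset.1 (mt mem_innerIdx.2 hi)
  choose! d hdF hdA using hout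
  -- swap the two halves: `c₂` on `T₁` and `c₁` on the rest of `innerIdx F A`
  let c : ι → σ := fun i => if i ∈ T₁ then c₂ i else if i ∈ innerIdx F A then c₁ i else d i
  have hcF : ∀ i, c i ∈ F i := by
    intro i
    simp only [c]
    split_ifs with h₁ h₂
    exacts [hc₂ i, hc₁ i, hdF i h₂]
  obtain ⟨j, hjA, hj⟩ := h.exists_lt hcF
  by_cases hj₁ : ∃ i ∈ T₁, j ∈ F i
  · obtain ⟨i', hi', hji'⟩ := hj₁
    refine hj.not_ge (transversalExp_apply_le_of_le_single_add hle₂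
      (fun hjk => hsep' i' hi' i₂ hi₂ j hji' (hjk ▸ hk₂)) fun i _ hi => ?_)
    simp only [c] at hi
    split_ifs at hi with h₁ h₂
    · exact hi
    · exact absurd (hi ▸ hc₁ i) (hsep' i' hi' i (mem_sdiff.2 ⟨h₂, h₁⟩) j hji')
    · exact absurd (hi ▸ hjA) (hdA i h₂)
  · push Not at hj₁
    refine hj.not_ge (transversalExp_apply_le_of_le_single_add hle₁
      (fun hjk => hj₁ i₁ hi₁ (hjk ▸ hk₁)) fun i _ hi => ?_)
    simp only [c] at hi
    split_ifs at hi with h₁ h₂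
    · exact absurd (hi ▸ hc₂ i) (hj₁ i h₁)
    · exact hi
    · exact absurd (hi ▸ hjA) (hdA i h₂)

end ColonEq

end Colon

section Backward

variable {ι σ : Type*} [DecidableEq σ] {F : ι → Finset σ}

-- `x_k x^u ∈ ∏_{i ∈ T} P_{F i}` for every variable `x_k` occurring in some `F i`, `i ∈ T`
def VarsInColon (F : ι → Finset σ) (T : Finset ι) (u : σ →₀ ℕ) : Prop :=
  ∀ k ∈ T.biUnion F, ∃ c : ι → σ, (∀ i ∈ T, c i ∈ F i) ∧
    transversalExp T c ≤ Finsupp.single k 1 + u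

theorem varsInColon_singleton (i : ι) : VarsInColon F {i} 0 := by
  intro k hk
  rw [singleton_biUnion] at hk
  exact ⟨fun _ => k, by simpa, by simp [transversalExp]⟩

theorem varsInColon_insert [DecidableEq ι] {T : Finset ι} {u : σ →₀ ℕ} (h : VarsInColon F T u)
    {i j : ι} {k : σ} (hi : i ∈ T) (hj : j ∉ T) (hki : k ∈ F i) (hkj : k ∈ F j) :
    VarsInColon F (insert j T) (u + Finsupp.single k 1) := by
  have key : ∀ x ∈ F j, ∀ y ∈ T.biUnion F, ∃ c : ι → σ, (∀ i ∈ insert j T, c i ∈ F i) ∧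
      transversalExp (insert j T) c ≤ Finsupp.single x 1 + (Finsupp.single y 1 + u) := by
    intro x hx y hy
    obtain ⟨c, hc, hle⟩ := h y hy
    refine ⟨Function.update c j x, fun i' hi' => ?_, ?_⟩
    · rcases mem_insert.1 hi' with rfl | hi'
      · simpa
      · rw [Function.update_of_ne (ne_of_mem_of_not_mem hi' hj)]
        exact hc i' hi'
    · rw [transversalExp_insert_update hj]
      exact add_le_add le_rfl hle
  intro k' hk'
  rw [biUnion_insert, mem_union] at hk'
  rcases hk' with hk'j | hk'T
  · obtain ⟨c, hc, hle⟩ := key k' hk'j k (mem_biUnion.2 ⟨i, hi, hki⟩)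
    exact ⟨c, hc, hle.trans_eq (by abel)⟩
  · obtain ⟨c, hc, hle⟩ := key k hkj k' hk'T
    exact ⟨c, hc, hle.trans_eq (by abel)⟩

theorem IntersectionConnected.exists_varsInColon [DecidableEq ι] {T : Finset ι}
    (hT : IntersectionConnected F T)
    {C : Finset σ} (hTC : ∀ i ∈ T, F i ⊆ C) {T' : Finset ι} (hT' : T' ⊆ T) (hne : T'.Nonempty)
    {u : σ →₀ ℕ} (hu : VarsInColon F T' u) (hdeg : ∑ k ∈ C, u k + 1 = #T') :
    ∃ u, VarsInColon F T u ∧ ∑ k ∈ C, u k + 1 = #T := by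
  induction hm : #(T \ T') generalizing T' u with
  | zero =>
    rw [card_eq_zero, sdiff_eq_empty_iff_subset] at hm
    exact ⟨u, subset_antisymm hT' hm ▸ hu, subset_antisymm hT' hm ▸ hdeg⟩
  | succ m ih =>
    obtain ⟨i, hi, j, hj, k, hk⟩ := hT T' hT' hne (card_pos.1 (by omega))
    rw [mem_sdiff] at hj
    rw [mem_inter] at hk
    refine ih (insert_subset hj.1 hT') (insert_nonempty j T')
      (varsInColon_insert hu hi hj.2 hk.1 hk.2) ?_ ?_
    · simp only [Finsupp.add_apply, sum_add_distrib, Finsupp.single_apply, sum_ite_eq,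
        if_pos (hTC i (hT' hi) hk.1), card_insert_of_notMem hj.2]
      omega
    · rw [sdiff_insert, card_erase_of_mem (mem_sdiff.2 hj), hm]
      rfl

theorem exists_colonEq [Fintype ι] [DecidableEq ι] {C : Finset σ} (hne : C.Nonempty)
    (hC : IsUnionOfInner F C) (hconn : IntersectionConnected F (innerIdx F C)) :
    ∃ b, ColonEq F b C := by
  set T := innerIdx F C
  obtain ⟨k₀, hk₀⟩ := hne
  obtain ⟨i₀, -, hi₀⟩ := hC k₀ hk₀
  obtain ⟨u, hu, hdeg⟩ := hconn.exists_varsInColon (fun i hi => mem_innerIdx.1 hi)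
    (singleton_subset_iff.2 (mem_innerIdx.2 hi₀)) (singleton_nonempty i₀)
    (varsInColon_singleton i₀) (by simp)
  have : Nonempty σ := ⟨k₀⟩
  have hout : ∀ i ∉ T, ∃ x ∈ F i, x ∉ C := fun i hi => not_subset.1 (mt mem_innerIdx.2 hi)
  choose! d hdF hdC using hout
  refine ⟨u + transversalExp Tᶜ d, fun e => ⟨?_, ?_⟩⟩
  · -- every transversal uses `#T` variables of `C`, while `x^(e + b)` has only `#T - 1` of them
    rintro ⟨_, ⟨c, hc, rfl⟩, hle⟩
    by_contra! he
    have hlow : #T ≤ ∑ k ∈ C, transversalExp univ c k := by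
      rw [sum_transversalExp_apply]
      exact card_le_card fun i hi => mem_filter.2 ⟨mem_univ _, mem_innerIdx.1 hi (hc i)⟩
    have hd : ∑ k ∈ C, transversalExp Tᶜ d k = 0 := by
      rw [sum_transversalExp_apply, card_eq_zero, filter_eq_empty_iff]
      exact fun i hi => hdC i (mem_compl.1 hi)
    have hup := sum_le_sum fun k (_ : k ∈ C) => hle k
    simp only [Finsupp.add_apply, sum_add_distrib, sum_eq_zero he, hd] at hup
    omega
  · rintro ⟨k, hkC, hke⟩
    obtain ⟨i, hki, hi⟩ := hC k hkC
    obtain ⟨c, hc, hle⟩ := hu k (mem_biUnion.2 ⟨i, mem_innerIdx.2 hi, hki⟩)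
    refine ⟨_, ⟨T.piecewise c d, fun i => ?_, rfl⟩, ?_⟩
    · by_cases hi : i ∈ T
      · simpa [hi] using hc i hi
      · simpa [hi] using hdF i hi
    · rw [transversalExp_piecewise, ← add_assoc]
      refine add_le_add (hle.trans (add_le_add ?_ le_rfl)) le_rfl
      exact Finsupp.single_le_iff.2 (Nat.one_le_iff_ne_zero.2 hke)

end Backward

section Polynomial

variable {K : Type} [Field K] {n : ℕ}

theorem PF_eq_span_monomial (A : Finset (Fin n)) :
    PF (K := K) A = Ideal.span ((monomial · 1) '' ((Finsupp.single · 1) '' ↑A)) := by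
  rw [PF, Set.image_image]
  rfl

theorem isPrime_PF (A : Finset (Fin n)) : (PF (K := K) A).IsPrime := by
  let φ : MvPolynomial (Fin n) K →ₐ[K] MvPolynomial (Fin n) K :=
    aeval fun k => if k ∈ A then 0 else X k
  have hX : ∀ k ∈ A, (X k : MvPolynomial (Fin n) K) ∈ PF A :=
    fun k hk => Ideal.subset_span ⟨k, hk, rfl⟩
  suffices RingHom.ker φ = PF A from this ▸ RingHom.ker_isPrime _
  refine le_antisymm (fun f hf => ?_) ?_
  · have hmk : (Ideal.Quotient.mkₐ K (PF A)).comp φ = Ideal.Quotient.mkₐ K (PF A) := by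
      refine algHom_ext fun k => ?_
      by_cases hk : k ∈ A
      · simp [φ, hk, Ideal.Quotient.eq_zero_iff_mem.mpr (hX k hk)]
      · simp [φ, hk]
    rw [← Ideal.Quotient.eq_zero_iff_mem, ← Ideal.Quotient.mkₐ_eq_mk K, ← hmk,
      AlgHom.comp_apply, RingHom.mem_ker.mp hf, map_zero]
  · refine Ideal.span_le.mpr ?_
    rintro _ ⟨k, hk, rfl⟩
    simpa [φ] using hk

open Pointwise in
theorem prod_PF_eq_span_monomial {ι : Type*} [Fintype ι] (F : ι → Finset (Fin n)) :
    ∏ i, PF (K := K) (F i) = Ideal.span ((monomial · 1) '' transversalExps F) := by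
  simp only [PF]
  rw [Ideal.prod_span]
  congr 1
  ext p
  rw [Set.mem_fintype_prod]
  constructor
  · rintro ⟨g, hg, rfl⟩
    choose c hc hcg using hg
    refine ⟨_, ⟨c, hc, rfl⟩, ?_⟩
    simp only [transversalExp, monomial_sum_one, ← hcg]
    rfl
  · rintro ⟨_, ⟨c, hc, rfl⟩, rfl⟩
    refine ⟨fun i => X (c i), fun i => ⟨c i, hc i, rfl⟩, ?_⟩
    simp only [transversalExp, monomial_sum_one]
    rfl

theorem PF_eq_colon_iff {ι : Type*} [Fintype ι] (F : ι → Finset (Fin n)) (A : Finset (Fin n))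
    (b : Fin n →₀ ℕ) :
    PF (K := K) A = (∏ i, PF (K := K) (F i)).colon {monomial b 1} ↔ ColonEq F b A := by
  classical
  rw [prod_PF_eq_span_monomial]
  constructor
  · intro h e
    have := SetLike.ext_iff.mp h (monomial e 1)
    rw [PF, mem_ideal_span_X_image, Submodule.mem_colon_singleton, smul_eq_mul,
      mul_monomial_mem_span_monomial_iff, support_monomial, if_neg one_ne_zero] at this
    simpa [Covers] using this.symm
  · intro h
    ext g
    rw [PF, mem_ideal_span_X_image, Submodule.mem_colon_singleton, smul_eq_mul,
      mul_monomial_mem_span_monomial_iff]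
    exact forall₂_congr fun e _ => (h e).symm

theorem PF_mem_associatedPrimes_iff {ι : Type*} [Fintype ι] (F : ι → Finset (Fin n))
    (A : Finset (Fin n)) :
    PF (K := K) A ∈ associatedPrimes (MvPolynomial (Fin n) K)
      (MvPolynomial (Fin n) K ⧸ ∏ i, PF (K := K) (F i)) ↔ ∃ b, ColonEq F b A := by
  rw [AssociatedPrimes.mem_iff, isAssociatedPrime_iff]
  constructor
  · rintro ⟨-, x, hx⟩
    obtain ⟨f, rfl⟩ := Ideal.Quotient.mk_surjective x
    rw [bot_colon_quotient_mk, PF_eq_span_monomial, prod_PF_eq_span_monomial] at hx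
    obtain ⟨b, hb⟩ := exists_monomial_colon_eq (PF_eq_span_monomial (K := K) A ▸ isPrime_PF A) hx
    rw [← PF_eq_span_monomial, ← prod_PF_eq_span_monomial] at hb
    exact ⟨b, (PF_eq_colon_iff F A b).mp hb⟩
  · rintro ⟨b, hb⟩
    refine ⟨isPrime_PF A, Ideal.Quotient.mk _ (monomial b 1), ?_⟩
    rw [bot_colon_quotient_mk]
    exact (PF_eq_colon_iff F A b).mpr hb

end Polynomial

/-- For a transversal polymatroidal ideal `I = P_{F_1} ⋯ P_{F_r}`: if `P_A` and `P_B` are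
associated primes of `S/I` and `A ∩ B ≠ ∅`, then `P_{A ∪ B}` is an associated prime. -/
theorem stmt12 {K : Type} [Field K] {n r : ℕ}
    (F : Fin r → Finset (Fin n)) (hF : ∀ i, (F i).Nonempty)
    (A B : Finset (Fin n)) (hAB : (A ∩ B).Nonempty)
    (hA : PF (K := K) A ∈ associatedPrimes (MvPolynomial (Fin n) K)
      (MvPolynomial (Fin n) K ⧸ ∏ i, PF (K := K) (F i)))
    (hB : PF (K := K) B ∈ associatedPrimes (MvPolynomial (Fin n) K)
      (MvPolynomial (Fin n) K ⧸ ∏ i, PF (K := K) (F i))) :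
    PF (K := K) (A ∪ B) ∈ associatedPrimes (MvPolynomial (Fin n) K)
      (MvPolynomial (Fin n) K ⧸ ∏ i, PF (K := K) (F i)) := by
  rw [PF_mem_associatedPrimes_iff] at hA hB ⊢
  obtain ⟨bA, hbA⟩ := hA
  obtain ⟨bB, hbB⟩ := hB
  obtain ⟨k, hk⟩ := hAB
  exact exists_colonEq ⟨k, mem_union_left _ (mem_inter.1 hk).1⟩
    (hbA.isUnionOfInner.union hbB.isUnionOfInner)
    (intersectionConnected_innerIdx_union hF hk hbA.isUnionOfInner hbB.isUnionOfInner
      (hbA.intersectionConnected hF) (hbB.intersectionConnected hF))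
end

section
/- Let I = I_{d;a_1,…,a_n} be a Veronese type ideal with 1 < d < Σ a_i and all a_i ≥ 1, and let k ≥ 1. Then I^k = I_{kd; ka_1,…,ka_n}, i.e., the k-th power of I is generated by all monomials x^u with |u| = kd and u(i) ≤ ka_i for all i. -/
open MvPolynomial

/-- The ideal of Veronese type `I_{d;a_1,…,a_n}`, generated by all monomials `x^u` with
`|u| = d` and `u(i) ≤ a_i` for all `i`. -/
noncomputable def veroneseIdeal (K : Type) [Field K] {n : ℕ} (d : ℕ) (a : Fin n → ℕ) :
    Ideal (MvPolynomial (Fin n) K) :=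
  Ideal.span ((fun u : Fin n →₀ ℕ => (monomial u (1 : K) : MvPolynomial (Fin n) K)) ''
    {u | ∑ i, u i = d ∧ ∀ i, u i ≤ a i})


-- existence of an integer vector between L and U with prescribed sum
lemma exists_between_vec {n : ℕ} (L U : Fin n → ℕ) (hLU : ∀ i, L i ≤ U i)
    (d : ℕ) (hL : ∑ i, L i ≤ d) (hU : d ≤ ∑ i, U i) :
    ∃ v : Fin n → ℕ, (∀ i, L i ≤ v i ∧ v i ≤ U i) ∧ ∑ i, v i = d := by
  induction n generalizing d with
  | zero =>
      refine ⟨0, fun i => i.elim0, ?_⟩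
      simp only [Finset.univ_eq_empty, Finset.sum_empty] at *
      omega
  | succ n ih =>
      rw [Fin.sum_univ_succ] at hL hU
      have hrs : ∑ i : Fin n, L i.succ ≤ ∑ i : Fin n, U i.succ :=
        Finset.sum_le_sum fun i _ => hLU i.succ
      have hLU0 := hLU 0
      set r := ∑ i : Fin n, L i.succ with hr
      set s := ∑ i : Fin n, U i.succ with hs
      set v0 := min (U 0) (d - r) with hv0
      obtain ⟨vt, hvt1, hvt2⟩ := ih (fun i => L i.succ) (fun i => U i.succ)
        (fun i => hLU i.succ) (d - v0)
        (show ∑ i : Fin n, L i.succ ≤ d - v0 by omega)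
        (show d - v0 ≤ ∑ i : Fin n, U i.succ by omega)
      refine ⟨Fin.cons v0 vt, ?_, ?_⟩
      · intro i
        refine Fin.cases ?_ ?_ i
        · simp only [Fin.cons_zero]; omega
        · intro j; simpa using hvt1 j
      · rw [Fin.sum_univ_succ]
        simp only [Fin.cons_zero, Fin.cons_succ]
        rw [hvt2]
        omega

lemma aux1 (k x b : ℕ) (h : x ≤ (k+1) * b) : (k+1) * (x - k*b) ≤ x := by
  rcases Nat.le_total x (k*b) with h'|h'
  · simp [Nat.sub_eq_zero_of_le h']
  · zify [h'] at *
    nlinarith [h, Int.natCast_nonneg k]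

lemma aux2 (k x b : ℕ) (h : x ≤ (k+1) * b) : x ≤ (k+1) * min x b := by
  rcases Nat.le_total x b with h'|h'
  · rw [min_eq_left h']; nlinarith
  · rwa [min_eq_right h']
lemma mem_veronese {K : Type} [Field K] {n : ℕ} {d : ℕ} {a : Fin n → ℕ}
    (u : Fin n →₀ ℕ) (h1 : ∑ i, u i = d) (h2 : ∀ i, u i ≤ a i) :
    (monomial u (1 : K)) ∈ veroneseIdeal K d a :=
  Ideal.subset_span ⟨u, ⟨h1, h2⟩, rfl⟩

lemma mem_veronese_pow {K : Type} [Field K] {n : ℕ} {d : ℕ} {a : Fin n → ℕ} :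
    ∀ k, 1 ≤ k → ∀ u : Fin n →₀ ℕ, (∑ i, u i = k * d) → (∀ i, u i ≤ k * a i) →
      (monomial u (1 : K)) ∈ (veroneseIdeal K d a) ^ k := by
  intro k hk
  induction k, hk using Nat.le_induction with
  | base =>
      intro u h1 h2
      rw [pow_one]
      exact mem_veronese u (by simpa using h1) (by simpa using h2)
  | succ k hk ih =>
      intro u h1 h2
      have hLU : ∀ i, u i - k * a i ≤ min (u i) (a i) := by
        intro i
        have h := h2 i
        have : u i - k * a i ≤ a i := by
          rcases Nat.le_total (u i) (k * a i) with h' | h'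
          · simp [Nat.sub_eq_zero_of_le h']
          · have := Nat.sub_le_sub_right h (k * a i)
            calc u i - k * a i ≤ (k+1) * a i - k * a i := this
              _ = a i := by rw [Nat.succ_mul, Nat.add_sub_cancel_left]
        exact le_min (Nat.sub_le _ _) this
      have hLd : ∑ i, (u i - k * a i) ≤ d := by
        have h3 : (k+1) * ∑ i, (u i - k * a i) ≤ ∑ i, u i := by
          rw [Finset.mul_sum]
          exact Finset.sum_le_sum fun i _ => aux1 k (u i) (a i) (h2 i)
        rw [h1] at h3
        exact Nat.le_of_mul_le_mul_left h3 (by omega)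
      have hUd : d ≤ ∑ i, min (u i) (a i) := by
        have h3 : ∑ i, u i ≤ (k+1) * ∑ i, min (u i) (a i) := by
          rw [Finset.mul_sum]
          exact Finset.sum_le_sum fun i _ => aux2 k (u i) (a i) (h2 i)
        rw [h1] at h3
        exact Nat.le_of_mul_le_mul_left h3 (by omega)
      obtain ⟨v, hv, hvsum⟩ := exists_between_vec (fun i => u i - k * a i)
        (fun i => min (u i) (a i)) hLU d hLd hUd
      set vf : Fin n →₀ ℕ := Finsupp.equivFunOnFinite.symm v with hvf
      set wf : Fin n →₀ ℕ := Finsupp.equivFunOnFinite.symm (fun i => u i - v i) with hwf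
      have hvfa : ∀ i, vf i = v i := fun i => rfl
      have hwfa : ∀ i, wf i = u i - v i := fun i => rfl
      have hvu : ∀ i, v i ≤ u i := fun i => (hv i).2.trans (min_le_left _ _)
      have huvw : u = wf + vf := by
        ext i
        simp only [Finsupp.add_apply, hvfa, hwfa]
        have := hvu i
        omega
      have hwsum : ∑ i, wf i = k * d := by
        have : ∑ i, wf i + ∑ i, vf i = ∑ i, u i := by
          rw [← Finset.sum_add_distrib]
          refine Finset.sum_congr rfl fun i _ => ?_
          simp only [hvfa, hwfa]
          have := hvu i
          omega
        simp only [hvfa] at this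
        rw [hvsum, h1, Nat.succ_mul] at this
        omega
      have hwbound : ∀ i, wf i ≤ k * a i := by
        intro i
        have := (hv i).1
        simp only [hwfa]
        omega
      rw [huvw, ← one_mul (1 : K), ← monomial_mul, pow_succ]
      exact Ideal.mul_mem_mul (ih wf hwsum hwbound)
        (mem_veronese vf (by simpa only [hvfa] using hvsum) fun i => (hv i).2.trans (min_le_right _ _))
lemma veronese_mul_le {K : Type} [Field K] {n : ℕ} (d e : ℕ) (a b : Fin n → ℕ) :
    veroneseIdeal K d a * veroneseIdeal K e b ≤
      veroneseIdeal K (d + e) (fun i => a i + b i) := by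
  rw [veroneseIdeal, veroneseIdeal, Ideal.span_mul_span']
  rw [Ideal.span_le]
  rintro x ⟨_, ⟨u, ⟨hu1, hu2⟩, rfl⟩, _, ⟨v, ⟨hv1, hv2⟩, rfl⟩, rfl⟩
  simp only []
  rw [monomial_mul, one_mul]
  refine mem_veronese (u + v) ?_ ?_
  · simp only [Finsupp.add_apply]
    rw [Finset.sum_add_distrib, hu1, hv1]
  · intro i
    simp only [Finsupp.add_apply]
    exact Nat.add_le_add (hu2 i) (hv2 i)

/-- For a Veronese type ideal `I = I_{d;a_1,…,a_n}` with `1 < d < Σ aᵢ` and all `aᵢ ≥ 1`,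
and `k ≥ 1`, we have `I^k = I_{kd;ka_1,…,ka_n}`. -/
theorem stmt18 {K : Type} [Field K] {n : ℕ} (d : ℕ) (a : Fin n → ℕ)
    (hd : 1 < d) (hlt : d < ∑ i, a i) (hone : ∀ i, 1 ≤ a i)
    (k : ℕ) (hk : 1 ≤ k) :
    (veroneseIdeal K d a) ^ k = veroneseIdeal K (k * d) (fun i => k * a i) := by
  refine le_antisymm ?_ ?_
  · induction k, hk using Nat.le_induction with
    | base => simp [one_mul]
    | succ k hk ih =>
        rw [pow_succ]
        refine le_trans (Ideal.mul_mono ih le_rfl) ?_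
        refine le_trans (veronese_mul_le (k*d) d (fun i => k * a i) a) ?_
        have h1 : k * d + d = (k+1) * d := by ring
        have h2 : (fun i => k * a i + a i) = (fun i => (k+1) * a i) := by
          funext i; ring
        rw [h1, h2]
  · rw [veroneseIdeal, Ideal.span_le]
    rintro x ⟨u, ⟨h1, h2⟩, rfl⟩
    exact mem_veronese_pow k hk u h1 h2
end
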